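/- arXiv:2203.02262 — 6 statements merged into one kernel-verified Lean document; each statement's English description precedes it below -/
import Mathlib

section
/- Let f : X → Y be a homeomorphism between bounded connected metric spaces. Then f is η-quasisymmetric if and only if f is θ-quasimöbius and satisfies the λ-three-point condition; moreover this is quantitative: η can be chosen depending only on θ and λ, and conversely θ and λ can be chosen depending only on η. -/
open Set Metric Topology

noncomputable section

universe u v w

/-- A control function: a self-homeomorphism of `[0,∞)`. -/
def CtrlFun (η : ℝ → ℝ) : Prop :=
  η 0 = 0 ∧ StrictMonoOn η (Set.Ici 0) ∧ ContinuousOn η (Set.Ici 0) ∧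
    Set.SurjOn η (Set.Ici 0) (Set.Ici 0)

/-- A domain: a nonempty open connected set. -/
def IsRegion {E : Type u} [TopologicalSpace E] (D : Set E) : Prop :=
  IsOpen D ∧ IsConnected D

/-- A proper domain. -/
def IsProperDomain {E : Type u} [TopologicalSpace E] (D : Set E) : Prop :=
  IsRegion D ∧ D ≠ Set.univ

section MetricDefs

variable {X : Type u} {Y : Type v} [MetricSpace X] [MetricSpace Y]

/-- The cross ratio of four points. -/
def crRatio (x y z w : X) : ℝ :=
  (dist x z * dist y w) / (dist x y * dist z w)

/-- The Bonk-Kleiner quantity `⟨x,y,z,w⟩`. -/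
def bkRatio (x y z w : X) : ℝ :=
  min (dist x z) (dist y w) / min (dist x y) (dist z w)

/-- `f` is `η`-quasisymmetric on `s`. -/
def QSOn (η : ℝ → ℝ) (f : X → Y) (s : Set X) : Prop :=
  ∀ x ∈ s, ∀ y ∈ s, ∀ z ∈ s, x ≠ y → x ≠ z → y ≠ z →
    dist (f x) (f y) / dist (f x) (f z) ≤ η (dist x y / dist x z)

/-- `f` is `θ`-quasimöbius on `s`. -/
def QMOn (θ : ℝ → ℝ) (f : X → Y) (s : Set X) : Prop :=
  ∀ x ∈ s, ∀ y ∈ s, ∀ z ∈ s, ∀ w ∈ s,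
    x ≠ y → x ≠ z → x ≠ w → y ≠ z → y ≠ w → z ≠ w →
    crRatio (f x) (f y) (f z) (f w) ≤ θ (crRatio x y z w)

/-- `f` is `θ`-quasimöbius on `s` relative to `A`. -/
def QMRelOn (θ : ℝ → ℝ) (f : X → Y) (s A : Set X) : Prop :=
  ∀ x ∈ s, ∀ y ∈ s, ∀ z ∈ s, ∀ w ∈ s,
    x ≠ y → x ≠ z → x ≠ w → y ≠ z → y ≠ w → z ≠ w →
    ((x ∈ A ∧ w ∈ A) ∨ (y ∈ A ∧ z ∈ A)) →
    crRatio (f x) (f y) (f z) (f w) ≤ θ (crRatio x y z w)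

/-- `f` is `L`-bilipschitz on `s`. -/
def BilipOn (L : ℝ) (f : X → Y) (s : Set X) : Prop :=
  ∀ x ∈ s, ∀ y ∈ s,
    dist x y / L ≤ dist (f x) (f y) ∧ dist (f x) (f y) ≤ L * dist x y

/-- The `λ`-three-point condition for `f : X → Y` between bounded spaces. -/
def ThreePointCond (lam : ℝ) (f : X → Y) : Prop :=
  ∃ z₁ z₂ z₃ : X,
    (Metric.diam (Set.univ : Set X) / lam ≤ dist z₁ z₂ ∧
     Metric.diam (Set.univ : Set X) / lam ≤ dist z₁ z₃ ∧
     Metric.diam (Set.univ : Set X) / lam ≤ dist z₂ z₃) ∧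
    (Metric.diam (Set.univ : Set Y) / lam ≤ dist (f z₁) (f z₂) ∧
     Metric.diam (Set.univ : Set Y) / lam ≤ dist (f z₁) (f z₃) ∧
     Metric.diam (Set.univ : Set Y) / lam ≤ dist (f z₂) (f z₃))

/-- The subset `A` of a metric space is `C`-uniformly perfect. -/
def UnifPerfect (C : ℝ) (A : Set X) : Prop :=
  ∀ x ∈ A, ∀ r : ℝ, 0 < r → (A \ Metric.ball x r).Nonempty →
    ((A ∩ Metric.ball x r) \ Metric.ball x (r / C)).Nonempty

end MetricDefs

/-- `f` is a homeomorphism from `s` onto `t`. -/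
def HomeoOn {X : Type u} {Y : Type v} [TopologicalSpace X] [TopologicalSpace Y]
    (f : X → Y) (s : Set X) (t : Set Y) : Prop :=
  Set.BijOn f s t ∧ ContinuousOn f s ∧
    ∃ g : Y → X, Set.BijOn g t s ∧ ContinuousOn g t ∧
      Set.EqOn (g ∘ f) id s ∧ Set.EqOn (f ∘ g) id t

section BanachDefs

variable {E : Type u} {E' : Type v} [NormedAddCommGroup E] [NormedSpace ℝ E]
  [NormedAddCommGroup E'] [NormedSpace ℝ E']

/-- Distance to the boundary of `D`. -/
def bdist (D : Set E) (x : E) : ℝ := Metric.infDist x (frontier D)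

/-- Quasihyperbolic length of a curve `γ` (restricted to `[0,1]`) in `D`. -/
def qhLength (D : Set E) (γ : ℝ → E) : ℝ :=
  ∫ t in (0:ℝ)..1, ‖deriv γ t‖ / bdist D (γ t)

/-- The quasihyperbolic metric of `D`: infimum of quasihyperbolic lengths of
curves in `D` joining `x` to `y`. -/
def qhDist (D : Set E) (x y : E) : ℝ :=
  sInf { l : ℝ | ∃ γ : ℝ → E, ContDiff ℝ 1 γ ∧ γ 0 = x ∧ γ 1 = y ∧
    (∀ t ∈ Set.Icc (0:ℝ) 1, γ t ∈ D) ∧ l = qhLength D γ }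

/-- `D` is a `c`-uniform domain: every pair of points can be joined by an
arclength-parametrized (i.e. `1`-Lipschitz) curve satisfying the two cigar
conditions. -/
def IsUniformDomain (c : ℝ) (D : Set E) : Prop :=
  ∀ x ∈ D, ∀ y ∈ D, ∃ ℓ : ℝ, 0 ≤ ℓ ∧ ∃ γ : ℝ → E,
    γ 0 = x ∧ γ ℓ = y ∧ (∀ t ∈ Set.Icc 0 ℓ, γ t ∈ D) ∧
    LipschitzOnWith 1 γ (Set.Icc 0 ℓ) ∧
    ℓ ≤ c * dist x y ∧
    ∀ t ∈ Set.Icc 0 ℓ, min t (ℓ - t) ≤ c * bdist D (γ t)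

/-- `f : D → D'` is `C`-coarsely `M`-quasihyperbolic. -/
def IsCQH (M C : ℝ) (D : Set E) (D' : Set E') (f : E → E') : Prop :=
  ∀ x ∈ D, ∀ y ∈ D,
    qhDist D x y / M - C ≤ qhDist D' (f x) (f y) ∧
    qhDist D' (f x) (f y) ≤ M * qhDist D x y + C

/-- `f : D → D'` is an `M`-quasihyperbolic (`M`-QH) map. -/
def IsQHMap (M : ℝ) (D : Set E) (D' : Set E') (f : E → E') : Prop :=
  ∀ x ∈ D, ∀ y ∈ D,
    qhDist D x y / M ≤ qhDist D' (f x) (f y) ∧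
    qhDist D' (f x) (f y) ≤ M * qhDist D x y

/-- `f : D → D'` is freely `φ`-quasiconformal. -/
def IsFQC (φ : ℝ → ℝ) (D : Set E) (D' : Set E') (f : E → E') : Prop :=
  ∀ G : Set E, G ⊆ D → IsRegion G →
    ∀ x ∈ G, ∀ y ∈ G,
      qhDist (f '' G) (f x) (f y) ≤ φ (qhDist G x y) ∧
      qhDist G x y ≤ φ (qhDist (f '' G) (f x) (f y))

/-- `f : D → D'` is `(L,ϑ)`-locally bilipschitz. -/
def LocBilip (L ϑ : ℝ) (D : Set E) (f : E → E') : Prop :=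
  ∀ x ∈ D, ∃ c : ℝ, 0 < c ∧
    ∀ y ∈ Metric.ball x (ϑ * bdist D x), ∀ z ∈ Metric.ball x (ϑ * bdist D x),
      (c / L) * dist y z ≤ dist (f y) (f z) ∧ dist (f y) (f z) ≤ L * c * dist y z

end BanachDefs

/-! ### The one-point extension `Ė = E ∪ {∞}` -/

/-- The one-point extension of `E`. -/
inductive OnePt (E : Type u) : Type u where
  | infty : OnePt E
  | of : E → OnePt E

namespace OnePt

variable {E : Type u} {E' : Type v} [NormedAddCommGroup E] [NormedAddCommGroup E']

/-- The topology of the one-point extension: neighborhoods of `∞` are the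
complements of closed bounded sets of `E`. -/
instance : TopologicalSpace (OnePt E) :=
  TopologicalSpace.generateFrom
    ({ s | ∃ U : Set E, IsOpen U ∧ s = OnePt.of '' U } ∪
     { s | ∃ B : Set E, IsClosed B ∧ Bornology.IsBounded B ∧
        s = insert OnePt.infty (OnePt.of '' Bᶜ) })

/-- The closure of `D ⊆ E` taken in the one-point extension. -/
def cl (D : Set E) : Set (OnePt E) := closure (OnePt.of '' D)

/-- The boundary of `D ⊆ E` taken in the one-point extension. -/
def bd (D : Set E) : Set (OnePt E) := frontier (OnePt.of '' D)

/-- The extended ratio `|x−y|/|x−z|` of a triple in the one-point extension;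
ratios involving `∞` are obtained by deleting the distances containing `∞`
(the value at non-distinct triples containing two `∞`'s is junk). -/
def ratioB : OnePt E → OnePt E → OnePt E → ENNReal
  | of x, of y, of z => ENNReal.ofReal (dist x y / dist x z)
  | infty, _, _ => 1
  | of _, infty, _ => ⊤
  | of _, of _, infty => 0

/-- The extended cross ratio of a quadruple in the one-point extension;
cross ratios involving `∞` are obtained by deleting the two distances
containing `∞` (the value at non-distinct quadruples with two `∞`'s is junk). -/
def crB : OnePt E → OnePt E → OnePt E → OnePt E → ℝ
  | of x, of y, of z, of w => (dist x z * dist y w) / (dist x y * dist z w)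
  | infty, of y, of z, of w => dist y w / dist z w
  | of x, infty, of z, of w => dist x z / dist z w
  | of x, of y, infty, of w => dist y w / dist x y
  | of x, of y, of z, infty => dist x z / dist x y
  | _, _, _, _ => 0

/-- Extension of a control function to `[0,∞]`. -/
def etaExt (η : ℝ → ℝ) : ENNReal → ENNReal :=
  fun t => if t = ⊤ then ⊤ else ENNReal.ofReal (η t.toReal)

/-- `F` is `η`-quasisymmetric on `s ⊆ Ė`. -/
def QSOnB (η : ℝ → ℝ) (F : OnePt E → OnePt E') (s : Set (OnePt E)) : Prop :=
  ∀ x ∈ s, ∀ y ∈ s, ∀ z ∈ s, x ≠ y → x ≠ z → y ≠ z →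
    ratioB (F x) (F y) (F z) ≤ etaExt η (ratioB x y z)

/-- `F` is `η`-quasisymmetric on `s ⊆ Ė` relative to `A`. -/
def QSRelB (η : ℝ → ℝ) (F : OnePt E → OnePt E') (s A : Set (OnePt E)) : Prop :=
  ∀ x ∈ s, ∀ y ∈ s, ∀ z ∈ s, x ≠ y → x ≠ z → y ≠ z →
    (x ∈ A ∨ (y ∈ A ∧ z ∈ A)) →
    ratioB (F x) (F y) (F z) ≤ etaExt η (ratioB x y z)

/-- `F` is `θ`-quasimöbius on `s ⊆ Ė`. -/
def QMOnB (θ : ℝ → ℝ) (F : OnePt E → OnePt E') (s : Set (OnePt E)) : Prop :=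
  ∀ x ∈ s, ∀ y ∈ s, ∀ z ∈ s, ∀ w ∈ s,
    x ≠ y → x ≠ z → x ≠ w → y ≠ z → y ≠ w → z ≠ w →
    crB (F x) (F y) (F z) (F w) ≤ θ (crB x y z w)

/-- `F` is `θ`-quasimöbius on `s ⊆ Ė` relative to `A`. -/
def QMRelB (θ : ℝ → ℝ) (F : OnePt E → OnePt E') (s A : Set (OnePt E)) : Prop :=
  ∀ x ∈ s, ∀ y ∈ s, ∀ z ∈ s, ∀ w ∈ s,
    x ≠ y → x ≠ z → x ≠ w → y ≠ z → y ≠ w → z ≠ w →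
    ((x ∈ A ∧ w ∈ A) ∨ (y ∈ A ∧ z ∈ A)) →
    crB (F x) (F y) (F z) (F w) ≤ θ (crB x y z w)

end OnePt



lemma my_coreA {AB CD AC BD tau M : ℝ} (hAB : 0 < AB) (hCD : 0 < CD) (hAC : 0 < AC)
    (hBD : 0 < BD) (htau : tau * (AB * CD) = AC * BD) (hM3 : 3 ≤ M) (hM4 : 4 * tau ≤ M)
    (htri : AB ≤ AC + CD + BD) (h1 : M * CD < BD) (h2 : M * CD < AC) : False := by
  nlinarith [mul_pos hAC hBD, mul_pos hCD hBD, mul_pos hCD hAC, mul_pos hAB hCD,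
    mul_le_mul_of_nonneg_right htri hCD.le, mul_lt_mul_of_pos_left h1 hAC,
    mul_lt_mul_of_pos_left h2 hBD, mul_pos hAC (mul_pos hCD hBD)]

lemma my_coreB {AB CD AC BD tau M : ℝ} (hAB : 0 < AB) (hCD : 0 < CD) (hAC : 0 < AC)
    (hBD : 0 < BD) (htau : tau * (AB * CD) = AC * BD) (hM3 : 3 ≤ M) (hM4 : 4 * tau ≤ M)
    (htri : BD ≤ AB + AC + CD) (h1 : M * CD < BD) (h2 : M * AB < BD) : False := by
  nlinarith [mul_pos hAB hCD, mul_pos hAB hBD, mul_pos hCD hBD,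
    mul_le_mul_of_nonneg_right htri (mul_pos hAB hCD).le,
    mul_lt_mul_of_pos_left h1 hAB, mul_lt_mul_of_pos_left h2 hCD,
    mul_pos hAB (mul_pos hCD hBD), sq_nonneg (AB - CD), sq_nonneg (AB*CD)]

lemma my_K {AB CD AC BD tau : ℝ} (hAB : 0 < AB) (hCD : 0 < CD) (hAC : 0 < AC)
    (hBD : 0 < BD) (htau : tau * (AB * CD) = AC * BD)
    (t1 : AB ≤ AC + CD + BD) (t2 : BD ≤ AB + AC + CD)
    (t3 : CD ≤ BD + AB + AC) (t4 : AC ≤ CD + BD + AB) :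
    (AC / AB ≤ 3 + 4 * tau ∧ BD / CD ≤ 3 + 4 * tau) ∨
    (BD / AB ≤ 3 + 4 * tau ∧ AC / CD ≤ 3 + 4 * tau) := by
  have htaupos : 0 < tau := by
    nlinarith [mul_pos hAC hBD, mul_pos hAB hCD]
  set M := 3 + 4 * tau with hM
  have hM3 : 3 ≤ M := by linarith
  have hM4 : 4 * tau ≤ M := by linarith
  rcases le_or_gt (AC / AB) M with hs | hs
  · rcases le_or_gt (BD / CD) M with hs' | hs'
    · exact Or.inl ⟨hs, hs'⟩
    · right
      have hs'' : M * CD < BD := (lt_div_iff₀ hCD).mp hs'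
      constructor
      · by_contra hu
        push_neg at hu
        exact my_coreB hAB hCD hAC hBD htau hM3 hM4 t2 hs'' ((lt_div_iff₀ hAB).mp hu)
      · by_contra hu'
        push_neg at hu'
        exact my_coreA hAB hCD hAC hBD htau hM3 hM4 t1 hs'' ((lt_div_iff₀ hCD).mp hu')
  · right
    have hs2 : M * AB < AC := (lt_div_iff₀ hAB).mp hs
    have htau' : tau * (CD * AB) = BD * AC := by ring_nf; ring_nf at htau; linarith
    constructor
    · by_contra hu
      push_neg at hu
      exact my_coreA hCD hAB hBD hAC htau' hM3 hM4 (by linarith) hs2 ((lt_div_iff₀ hAB).mp hu)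
    · by_contra hu'
      push_neg at hu'
      exact my_coreB hCD hAB hBD hAC htau' hM3 hM4 (by linarith) hs2 ((lt_div_iff₀ hCD).mp hu')

lemma my_exists_good (R S : Fin 3 → Prop)
    (hR : ∀ i j : Fin 3, i ≠ j → R i → R j → False)
    (hS : ∀ i j : Fin 3, i ≠ j → S i → S j → False) :
    ∃ i, ¬ R i ∧ ¬ S i := by
  by_contra h
  push_neg at h
  by_cases h0 : R 0
  · have h1 : ¬ R 1 := fun hr => hR 0 1 (by decide) h0 hr
    have h2 : ¬ R 2 := fun hr => hR 0 2 (by decide) h0 hr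
    exact hS 1 2 (by decide) (h 1 h1) (h 2 h2)
  · have hs0 := h 0 h0
    by_cases h1 : R 1
    · have h2 : ¬ R 2 := fun hr => hR 1 2 (by decide) h1 hr
      exact hS 0 2 (by decide) hs0 (h 2 h2)
    · exact hS 0 1 (by decide) hs0 (h 1 h1)

lemma my_select {α : Type*} (Z : Fin 3 → α)
    (hZ : ∀ i j : Fin 3, i ≠ j → Z i ≠ Z j)
    (P Q : α → Prop) (p q : α) (hpq : p ≠ q)
    (hP : ∀ i j : Fin 3, i ≠ j → P (Z i) → P (Z j) → False)
    (hQ : ∀ i j : Fin 3, i ≠ j → Q (Z i) → Q (Z j) → False) :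
    (∃ i j : Fin 3, i ≠ j ∧ ¬ P (Z i) ∧ Z i ≠ q ∧ ¬ Q (Z j) ∧ Z j ≠ p) ∨
    (∃ i j : Fin 3, i ≠ j ∧ Z i = p ∧ Z j = q) := by
  obtain ⟨i0, hi1, hi2⟩ := my_exists_good (fun i => P (Z i)) (fun i => Z i = q) hP
    (fun i j hij h1 h2 => hZ i j hij (h1.trans h2.symm))
  obtain ⟨j0, hj1, hj2⟩ := my_exists_good (fun i => Q (Z i)) (fun i => Z i = p) hQ
    (fun i j hij h1 h2 => hZ i j hij (h1.trans h2.symm))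
  by_cases hij : i0 ≠ j0
  · exact Or.inl ⟨i0, j0, hij, hi1, hi2, hj1, hj2⟩
  push_neg at hij
  subst hij
  obtain ⟨m, n, hkm, hkn, hmn⟩ : ∃ m n : Fin 3, i0 ≠ m ∧ i0 ≠ n ∧ m ≠ n := by
    fin_cases i0
    · exact ⟨1, 2, by decide, by decide, by decide⟩
    · exact ⟨0, 2, by decide, by decide, by decide⟩
    · exact ⟨0, 1, by decide, by decide, by decide⟩
  by_cases hmA : ¬ P (Z m) ∧ Z m ≠ q
  · exact Or.inl ⟨m, i0, hkm.symm, hmA.1, hmA.2, hj1, hj2⟩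
  by_cases hmB : ¬ Q (Z m) ∧ Z m ≠ p
  · exact Or.inl ⟨i0, m, hkm, hi1, hi2, hmB.1, hmB.2⟩
  by_cases hnA : ¬ P (Z n) ∧ Z n ≠ q
  · exact Or.inl ⟨n, i0, hkn.symm, hnA.1, hnA.2, hj1, hj2⟩
  by_cases hnB : ¬ Q (Z n) ∧ Z n ≠ p
  · exact Or.inl ⟨i0, n, hkn, hi1, hi2, hnB.1, hnB.2⟩
  push_neg at hmA hmB hnA hnB
  right
  by_cases hm : P (Z m)
  · have hnq : Z n = q := by
      by_cases hn : P (Z n)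
      · exact absurd (hP m n hmn hm hn) not_false
      · exact hnA hn
    have hmp : Z m = p := by
      by_cases hq : Q (Z m)
      · have hnQ : ¬ Q (Z n) := fun h => hQ m n hmn hq h
        have h2 := hnB hnQ
        rw [h2] at hnq; exact absurd hnq hpq
      · exact hmB hq
    exact ⟨m, n, hmn, hmp, hnq⟩
  · have hmq : Z m = q := hmA hm
    have hnp : Z n = p := by
      by_cases hq : Q (Z n)
      · have hmQ : ¬ Q (Z m) := fun h => hQ m n hmn h hq
        have hmp := hmB hmQ
        rw [hmp] at hmq; exact absurd hmq hpq
      · exact hnB hq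
    exact ⟨n, m, hmn.symm, hnp, hmq⟩

section AB
variable {X : Type*} {Y : Type*} [MetricSpace X] [MetricSpace Y]

lemma my_lemmaA (f : X → Y) (hf : Function.Injective f)
    {θ : ℝ → ℝ} {lam d d' : ℝ}
    (hθ0 : θ 0 = 0) (hθmono : ∀ a b : ℝ, 0 ≤ a → a ≤ b → θ a ≤ θ b)
    (hlam : 1 ≤ lam) (hd : 0 < d) (hd' : 0 < d')
    (hdiam : ∀ u v : X, dist u v ≤ d) (hdiam' : ∀ u v : X, dist (f u) (f v) ≤ d')
    (Z : Fin 3 → X)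
    (hsep : ∀ i j : Fin 3, i ≠ j → d / lam ≤ dist (Z i) (Z j))
    (hsep' : ∀ i j : Fin 3, i ≠ j → d' / lam ≤ dist (f (Z i)) (f (Z j)))
    (hQM : ∀ x y z w : X, x ≠ y → x ≠ z → x ≠ w → y ≠ z → y ≠ w → z ≠ w →
      dist (f x) (f z) * dist (f y) (f w) / (dist (f x) (f y) * dist (f z) (f w)) ≤
        θ (dist x z * dist y w / (dist x y * dist z w)))
    (p q : X) (hpq : p ≠ q) :
    dist (f p) (f q) / d' ≤
      lam * θ (4 * lam ^ 2 * (dist p q / d)) + lam * (dist p q / d) := by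
  have hlam0 : 0 < lam := lt_of_lt_of_le one_pos hlam
  have hθnn : ∀ t : ℝ, 0 ≤ t → 0 ≤ θ t := fun t ht => hθ0 ▸ hθmono 0 t le_rfl ht
  have h2l : 0 < 2 * lam := by linarith
  have hd2l : 0 < d / (2 * lam) := div_pos hd h2l
  have hhalf : d / (2 * lam) + d / (2 * lam) = d / lam := by
    field_simp; ring
  have hZ : ∀ i j : Fin 3, i ≠ j → Z i ≠ Z j := by
    intro i j hij h
    have := hsep i j hij
    rw [h, dist_self] at this
    have : 0 < d / lam := div_pos hd hlam0
    linarith [hsep i j hij, (dist_self (Z j)) ]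
  have hargnn : 0 ≤ 4 * lam ^ 2 * (dist p q / d) := by positivity
  have hθT : 0 ≤ θ (4 * lam ^ 2 * (dist p q / d)) := hθnn _ hargnn
  rcases my_select Z hZ (fun u => dist p u < d / (2 * lam)) (fun u => dist q u < d / (2 * lam))
      p q hpq
      (fun i j hij h1 h2 => by
        have h3 := hsep i j hij
        have h4 := dist_triangle (Z i) p (Z j)
        rw [dist_comm (Z i) p] at h4
        linarith)
      (fun i j hij h1 h2 => by
        have h3 := hsep i j hij
        have h4 := dist_triangle (Z i) q (Z j)
        rw [dist_comm (Z i) q] at h4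
        linarith) with
    ⟨i, j, hij, hPi, hiq, hQj, hjp⟩ | ⟨i, j, hij, hip, hjq⟩
  · -- main case
    push_neg at hPi hQj
    have hpzi : p ≠ Z i := by
      intro h; rw [h, dist_self] at hPi; linarith
    have hqzj : q ≠ Z j := by
      intro h; rw [h, dist_self] at hQj; linarith
    have hzij : Z i ≠ Z j := hZ i j hij
    have hpzj : p ≠ Z j := hjp.symm
    have hqzi : Z i ≠ q := hiq
    have hQMk := hQM p (Z i) q (Z j) hpzi hpq hpzj hqzi hzij hqzj
    set A := dist p q with hA
    have hA0 : 0 < A := dist_pos.mpr hpq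
    -- bound the domain cross ratio
    have hτnn : 0 ≤ dist p q * dist (Z i) (Z j) / (dist p (Z i) * dist q (Z j)) := by positivity
    have hτ : dist p q * dist (Z i) (Z j) / (dist p (Z i) * dist q (Z j)) ≤
        4 * lam ^ 2 * (A / d) := by
      rw [div_le_iff₀ (mul_pos (hd2l.trans_le hPi) (hd2l.trans_le hQj))]
      calc dist p q * dist (Z i) (Z j) ≤ A * d :=
            mul_le_mul_of_nonneg_left (hdiam _ _) dist_nonneg
        _ = (4 * lam ^ 2 * (A / d)) * (d / (2 * lam) * (d / (2 * lam))) := by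
            field_simp; ring
        _ ≤ (4 * lam ^ 2 * (A / d)) * (dist p (Z i) * dist q (Z j)) := by
            apply mul_le_mul_of_nonneg_left _ (by positivity)
            exact mul_le_mul hPi hQj hd2l.le dist_nonneg
    have hθτ : θ (dist p q * dist (Z i) (Z j) / (dist p (Z i) * dist q (Z j))) ≤
        θ (4 * lam ^ 2 * (A / d)) := hθmono _ _ hτnn hτ
    have hDpos : 0 < dist (f p) (f (Z i)) * dist (f q) (f (Z j)) :=
      mul_pos (dist_pos.mpr (fun h => hpzi (hf h))) (dist_pos.mpr (fun h => hqzj (hf h)))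
    have key : dist (f p) (f q) * dist (f (Z i)) (f (Z j)) ≤
        θ (4 * lam ^ 2 * (A / d)) * (d' * d') := by
      have h5 := (div_le_iff₀ hDpos).mp (hQMk.trans hθτ)
      calc dist (f p) (f q) * dist (f (Z i)) (f (Z j)) ≤
          θ (4 * lam ^ 2 * (A / d)) * (dist (f p) (f (Z i)) * dist (f q) (f (Z j))) := h5
        _ ≤ θ (4 * lam ^ 2 * (A / d)) * (d' * d') := by
            apply mul_le_mul_of_nonneg_left _ hθT
            exact mul_le_mul (hdiam' _ _) (hdiam' _ _) dist_nonneg hd'.le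
    have key2 : dist (f p) (f q) * (d' / lam) ≤ θ (4 * lam ^ 2 * (A / d)) * (d' * d') :=
      le_trans (mul_le_mul_of_nonneg_left (hsep' i j hij) dist_nonneg) key
    have key3 : dist (f p) (f q) ≤ lam * θ (4 * lam ^ 2 * (A / d)) * d' := by
      calc dist (f p) (f q) = (lam / d') * (dist (f p) (f q) * (d' / lam)) := by
            field_simp
        _ ≤ (lam / d') * (θ (4 * lam ^ 2 * (A / d)) * (d' * d')) :=
            mul_le_mul_of_nonneg_left key2 (by positivity)
        _ = lam * θ (4 * lam ^ 2 * (A / d)) * d' := by field_simp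
    have : dist (f p) (f q) / d' ≤ lam * θ (4 * lam ^ 2 * (A / d)) := by
      rw [div_le_iff₀ hd']; exact key3
    have hnn2 : 0 ≤ lam * (A / d) := by positivity
    linarith
  · -- p and q are both normalization points
    have hsepij := hsep i j hij
    rw [hip, hjq] at hsepij
    have hLHS : dist (f p) (f q) / d' ≤ 1 := by
      rw [div_le_one hd']; exact hdiam' p q
    have h2 : 1 / lam ≤ dist p q / d := by
      rw [div_le_div_iff₀ hlam0 hd]
      have := (div_le_iff₀ hlam0).mp hsepij
      linarith
    have h3 : 1 ≤ lam * (dist p q / d) := by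
      calc (1:ℝ) = lam * (1 / lam) := by field_simp
        _ ≤ lam * (dist p q / d) := mul_le_mul_of_nonneg_left h2 hlam0.le
    have h4 : 0 ≤ lam * θ (4 * lam ^ 2 * (dist p q / d)) := mul_nonneg hlam0.le hθT
    linarith
end AB

section B
variable {X : Type*} {Y : Type*} [MetricSpace X] [MetricSpace Y]

lemma my_lemmaB (f : X → Y) (hf : Function.Injective f)
    {θ : ℝ → ℝ} {lam d d' : ℝ}
    (hθ0 : θ 0 = 0) (hθmono : ∀ a b : ℝ, 0 ≤ a → a ≤ b → θ a ≤ θ b)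
    (hlam : 1 ≤ lam) (hd : 0 < d) (hd' : 0 < d')
    (hdiam : ∀ u v : X, dist u v ≤ d) (hdiam' : ∀ u v : X, dist (f u) (f v) ≤ d')
    (Z : Fin 3 → X)
    (hsep : ∀ i j : Fin 3, i ≠ j → d / lam ≤ dist (Z i) (Z j))
    (hsep' : ∀ i j : Fin 3, i ≠ j → d' / lam ≤ dist (f (Z i)) (f (Z j)))
    (hQM : ∀ x y z w : X, x ≠ y → x ≠ z → x ≠ w → y ≠ z → y ≠ w → z ≠ w →
      dist (f x) (f z) * dist (f y) (f w) / (dist (f x) (f y) * dist (f z) (f w)) ≤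
        θ (dist x z * dist y w / (dist x y * dist z w)))
    (p q : X) (hpq : p ≠ q) (T : ℝ) (hT : θ (lam * d / dist p q) ≤ T) :
    d' ≤ (lam + 4 * lam ^ 2 * T) * dist (f p) (f q) := by
  have hlam0 : 0 < lam := lt_of_lt_of_le one_pos hlam
  have hθnn : ∀ t : ℝ, 0 ≤ t → 0 ≤ θ t := fun t ht => hθ0 ▸ hθmono 0 t le_rfl ht
  have h2l : 0 < 2 * lam := by linarith
  have hd2l : 0 < d' / (2 * lam) := div_pos hd' h2l
  have hA0 : 0 < dist p q := dist_pos.mpr hpq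
  have hTnn : 0 ≤ T := le_trans (hθnn _ (by positivity)) hT
  have hfpq : 0 < dist (f p) (f q) := dist_pos.mpr (fun h => hpq (hf h))
  have hhalf : d' / (2 * lam) + d' / (2 * lam) = d' / lam := by field_simp; ring
  have hZ : ∀ i j : Fin 3, i ≠ j → Z i ≠ Z j := by
    intro i j hij h
    have h3 := hsep i j hij
    rw [h, dist_self] at h3
    have : 0 < d / lam := div_pos hd hlam0
    linarith
  rcases my_select Z hZ (fun u => dist (f p) (f u) < d' / (2 * lam))
      (fun u => dist (f q) (f u) < d' / (2 * lam)) p q hpq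
      (fun i j hij h1 h2 => by
        have h3 := hsep' i j hij
        have h4 := dist_triangle (f (Z i)) (f p) (f (Z j))
        rw [dist_comm (f (Z i)) (f p)] at h4
        linarith)
      (fun i j hij h1 h2 => by
        have h3 := hsep' i j hij
        have h4 := dist_triangle (f (Z i)) (f q) (f (Z j))
        rw [dist_comm (f (Z i)) (f q)] at h4
        linarith) with
    ⟨i, j, hij, hPi, hiq, hQj, hjp⟩ | ⟨i, j, hij, hip, hjq⟩
  · push_neg at hPi hQj
    have hpzi : p ≠ Z i := by
      intro h; rw [h, dist_self] at hPi; linarith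
    have hqzj : q ≠ Z j := by
      intro h; rw [h, dist_self] at hQj; linarith
    have hzij : Z i ≠ Z j := hZ i j hij
    have hQMk := hQM p q (Z i) (Z j) hpq hpzi hjp.symm (Ne.symm hiq) hqzj hzij
    have hzijpos : 0 < dist (f (Z i)) (f (Z j)) :=
      lt_of_lt_of_le (div_pos hd' hlam0) (hsep' i j hij)
    have hden : 0 < dist p q * dist (Z i) (Z j) :=
      mul_pos hA0 (dist_pos.mpr hzij)
    have hτ : dist p (Z i) * dist q (Z j) / (dist p q * dist (Z i) (Z j)) ≤
        lam * d / dist p q := by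
      rw [div_le_iff₀ hden]
      calc dist p (Z i) * dist q (Z j) ≤ d * d :=
            mul_le_mul (hdiam _ _) (hdiam _ _) dist_nonneg hd.le
        _ = (lam * d) * (d / lam) := by field_simp
        _ ≤ (lam * d) * dist (Z i) (Z j) :=
            mul_le_mul_of_nonneg_left (hsep i j hij) (by positivity)
        _ = lam * d / dist p q * (dist p q * dist (Z i) (Z j)) := by
            field_simp
    have hθτ : θ (dist p (Z i) * dist q (Z j) / (dist p q * dist (Z i) (Z j))) ≤ T :=
      le_trans (hθmono _ _ (by positivity) hτ) hT
    have hden' : 0 < dist (f p) (f q) * dist (f (Z i)) (f (Z j)) := mul_pos hfpq hzijpos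
    have key : d' / (2 * lam) * (d' / (2 * lam)) ≤ T * (dist (f p) (f q) * d') := by
      calc d' / (2 * lam) * (d' / (2 * lam)) ≤
          dist (f p) (f (Z i)) * dist (f q) (f (Z j)) :=
            mul_le_mul hPi hQj hd2l.le dist_nonneg
        _ ≤ T * (dist (f p) (f q) * dist (f (Z i)) (f (Z j))) :=
            (div_le_iff₀ hden').mp (hQMk.trans hθτ)
        _ ≤ T * (dist (f p) (f q) * d') := by
            apply mul_le_mul_of_nonneg_left _ hTnn
            exact mul_le_mul_of_nonneg_left (hdiam' _ _) dist_nonneg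
    have key2 : d' ≤ 4 * lam ^ 2 * T * dist (f p) (f q) := by
      calc d' = (4 * lam ^ 2 / d') * (d' / (2 * lam) * (d' / (2 * lam))) := by
            field_simp; ring
        _ ≤ (4 * lam ^ 2 / d') * (T * (dist (f p) (f q) * d')) :=
            mul_le_mul_of_nonneg_left key (by positivity)
        _ = 4 * lam ^ 2 * T * dist (f p) (f q) := by field_simp
    nlinarith [mul_nonneg hlam0.le hfpq.le]
  · have hsepij := hsep' i j hij
    rw [hip, hjq] at hsepij
    have h1 : d' ≤ lam * dist (f p) (f q) := by
      rw [div_le_iff₀ hlam0] at hsepij; linarith [hsepij]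
    nlinarith [mul_nonneg (mul_nonneg (by positivity : (0:ℝ) ≤ 4 * lam ^ 2) hTnn) hfpq.le]

section Main1
variable {X : Type*} {Y : Type*} [MetricSpace X] [MetricSpace Y]

set_option maxHeartbeats 1000000 in
lemma my_part1 (f : X → Y) (hf : Function.Injective f)
    {θ : ℝ → ℝ} {lam d d' : ℝ}
    (hθ0 : θ 0 = 0) (hθmono : ∀ a b : ℝ, 0 ≤ a → a ≤ b → θ a ≤ θ b)
    (hlam : 1 ≤ lam) (hd : 0 < d) (hd' : 0 < d')
    (hdiam : ∀ u v : X, dist u v ≤ d) (hdiam' : ∀ u v : X, dist (f u) (f v) ≤ d')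
    (Z : Fin 3 → X)
    (hsep : ∀ i j : Fin 3, i ≠ j → d / lam ≤ dist (Z i) (Z j))
    (hsep' : ∀ i j : Fin 3, i ≠ j → d' / lam ≤ dist (f (Z i)) (f (Z j)))
    (hQM : ∀ x y z w : X, x ≠ y → x ≠ z → x ≠ w → y ≠ z → y ≠ w → z ≠ w →
      dist (f x) (f z) * dist (f y) (f w) / (dist (f x) (f y) * dist (f z) (f w)) ≤
        θ (dist x z * dist y w / (dist x y * dist z w)))
    (x y z : X) (hxy : x ≠ y) (hxz : x ≠ z) (hyz : y ≠ z) :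
    dist (f x) (f y) / dist (f x) (f z) ≤
      4 * lam ^ 2 * (θ (4 * lam ^ 2 * (dist x y / dist x z)) + dist x y / dist x z) := by
  have hlam0 : 0 < lam := lt_of_lt_of_le one_pos hlam
  have hθnn : ∀ t : ℝ, 0 ≤ t → 0 ≤ θ t := fun t ht => hθ0 ▸ hθmono 0 t le_rfl ht
  have h2l : 0 < 2 * lam := by linarith
  have h4l : 0 < 4 * lam := by linarith
  have hxy0 : 0 < dist x y := dist_pos.mpr hxy
  have hxz0 : 0 < dist x z := dist_pos.mpr hxz
  have hfxy : 0 < dist (f x) (f y) := dist_pos.mpr (fun h => hxy (hf h))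
  have hfxz : 0 < dist (f x) (f z) := dist_pos.mpr (fun h => hxz (hf h))
  set t := dist x y / dist x z with hts
  have ht : 0 < t := div_pos hxy0 hxz0
  have hTtnn : 0 ≤ θ (4 * lam ^ 2 * t) := hθnn _ (by positivity)
  -- choose the auxiliary point w = Z i
  obtain ⟨i, hRi, hSi⟩ := my_exists_good (fun i => dist x (Z i) < d / (2 * lam))
      (fun i => dist (f x) (f (Z i)) < d' / (2 * lam))
      (fun i j hij h1 h2 => by
        have h3 := hsep i j hij
        have h4 := dist_triangle (Z i) x (Z j)
        rw [dist_comm (Z i) x] at h4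
        have h5 : d / (2 * lam) + d / (2 * lam) = d / lam := by field_simp; ring
        linarith)
      (fun i j hij h1 h2 => by
        have h3 := hsep' i j hij
        have h4 := dist_triangle (f (Z i)) (f x) (f (Z j))
        rw [dist_comm (f (Z i)) (f x)] at h4
        have h5 : d' / (2 * lam) + d' / (2 * lam) = d' / lam := by field_simp; ring
        linarith)
  push_neg at hRi hSi
  set w := Z i with hw
  have hw1 : d / (2 * lam) ≤ dist x w := hRi
  have hw2 : d' / (2 * lam) ≤ dist (f x) (f w) := hSi
  have hxw : x ≠ w := by
    intro h; rw [h, dist_self] at hw1; linarith [div_pos hd h2l]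
  rcases le_or_gt (d' / (4 * lam)) (dist (f x) (f z)) with hI | hII
  · -- Case I
    have hA := my_lemmaA f hf hθ0 hθmono hlam hd hd' hdiam hdiam' Z hsep hsep' hQM x y hxy
    have h1 : dist x y / d ≤ t := by
      rw [hts]
      exact div_le_div_of_nonneg_left dist_nonneg hxz0 (hdiam x z)
    have h2 : θ (4 * lam ^ 2 * (dist x y / d)) ≤ θ (4 * lam ^ 2 * t) :=
      hθmono _ _ (by positivity) (by nlinarith)
    have h3 : dist (f x) (f y) / dist (f x) (f z) ≤ 4 * lam * (dist (f x) (f y) / d') := by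
      calc dist (f x) (f y) / dist (f x) (f z) ≤ dist (f x) (f y) / (d' / (4 * lam)) := by
            exact div_le_div_of_nonneg_left dist_nonneg (div_pos hd' h4l) hI
        _ = 4 * lam * (dist (f x) (f y) / d') := by field_simp
    have h4 : dist (f x) (f y) / d' ≤ lam * θ (4 * lam ^ 2 * t) + lam * t := by
      calc dist (f x) (f y) / d' ≤
          lam * θ (4 * lam ^ 2 * (dist x y / d)) + lam * (dist x y / d) := hA
        _ ≤ lam * θ (4 * lam ^ 2 * t) + lam * t := by
            have := mul_le_mul_of_nonneg_left h2 hlam0.le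
            have := mul_le_mul_of_nonneg_left h1 hlam0.le
            linarith
    calc dist (f x) (f y) / dist (f x) (f z) ≤ 4 * lam * (dist (f x) (f y) / d') := h3
      _ ≤ 4 * lam * (lam * θ (4 * lam ^ 2 * t) + lam * t) :=
          mul_le_mul_of_nonneg_left h4 (by positivity)
      _ = 4 * lam ^ 2 * (θ (4 * lam ^ 2 * t) + t) := by ring
  · -- Case II
    have hq : d' / (2 * lam) - d' / (4 * lam) = d' / (4 * lam) := by field_simp; ring
    have hbz : d' / (4 * lam) ≤ dist (f z) (f w) := by
      have h4 := dist_triangle (f x) (f z) (f w)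
      linarith
    have hzw : z ≠ w := by
      intro h; rw [h, dist_self] at hbz; linarith [div_pos hd' h4l]
    rcases le_or_gt (dist x y) (dist x w / 2) with hII1 | hII2
    · -- Case II.1
      have hywlb : d / (4 * lam) ≤ dist y w := by
        have h4 := dist_triangle x y w
        have h5 : d / (2 * lam) / 2 = d / (4 * lam) := by rw [div_div]; congr 1; ring
        linarith
      have hyw0 : 0 < dist y w := lt_of_lt_of_le (div_pos hd h4l) hywlb
      have hywne : y ≠ w := fun h => by rw [h, dist_self] at hyw0; linarith
      have hfyw : 0 < dist (f y) (f w) := dist_pos.mpr (fun h => hywne (hf h))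
      have hQMk := hQM x z y w hxz hxy hxw (Ne.symm hyz) hzw hywne
      have hτ : dist x y * dist z w / (dist x z * dist y w) ≤ 4 * lam ^ 2 * t := by
        rw [div_le_iff₀ (mul_pos hxz0 hyw0)]
        calc dist x y * dist z w ≤ dist x y * d :=
              mul_le_mul_of_nonneg_left (hdiam _ _) dist_nonneg
          _ ≤ lam * (dist x y * d) := le_mul_of_one_le_left (by positivity) hlam
          _ = (4 * lam ^ 2 * t) * (dist x z * (d / (4 * lam))) := by
              rw [hts]; field_simp
          _ ≤ (4 * lam ^ 2 * t) * (dist x z * dist y w) := by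
              apply mul_le_mul_of_nonneg_left _ (by positivity)
              exact mul_le_mul_of_nonneg_left hywlb hxz0.le
      have hθτ : θ (dist x y * dist z w / (dist x z * dist y w)) ≤ θ (4 * lam ^ 2 * t) :=
        hθmono _ _ (by positivity) hτ
      have hden' : 0 < dist (f x) (f z) * dist (f y) (f w) := mul_pos hfxz hfyw
      have key : dist (f x) (f y) * dist (f z) (f w) ≤
          θ (4 * lam ^ 2 * t) * (dist (f x) (f z) * d') := by
        calc dist (f x) (f y) * dist (f z) (f w) ≤
            θ (4 * lam ^ 2 * t) * (dist (f x) (f z) * dist (f y) (f w)) :=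
              (div_le_iff₀ hden').mp (hQMk.trans hθτ)
          _ ≤ θ (4 * lam ^ 2 * t) * (dist (f x) (f z) * d') := by
              apply mul_le_mul_of_nonneg_left _ hTtnn
              exact mul_le_mul_of_nonneg_left (hdiam' _ _) dist_nonneg
      have key2 : dist (f x) (f y) ≤ 4 * lam * θ (4 * lam ^ 2 * t) * dist (f x) (f z) := by
        calc dist (f x) (f y) =
            (4 * lam / d') * (dist (f x) (f y) * (d' / (4 * lam))) := by field_simp
          _ ≤ (4 * lam / d') * (dist (f x) (f y) * dist (f z) (f w)) := by
              apply mul_le_mul_of_nonneg_left _ (by positivity)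
              exact mul_le_mul_of_nonneg_left hbz dist_nonneg
          _ ≤ (4 * lam / d') * (θ (4 * lam ^ 2 * t) * (dist (f x) (f z) * d')) :=
              mul_le_mul_of_nonneg_left key (by positivity)
          _ = 4 * lam * θ (4 * lam ^ 2 * t) * dist (f x) (f z) := by field_simp
      have h7 : dist (f x) (f y) / dist (f x) (f z) ≤ 4 * lam * θ (4 * lam ^ 2 * t) :=
        (div_le_iff₀ hfxz).mpr key2
      have h8 : 4 * lam * θ (4 * lam ^ 2 * t) ≤ 4 * lam ^ 2 * θ (4 * lam ^ 2 * t) :=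
        mul_le_mul_of_nonneg_right (by nlinarith) hTtnn
      have h9 : 0 ≤ 4 * lam ^ 2 * t := by positivity
      linarith
    · -- Case II.2
      have hxyd : d / (4 * lam) < dist x y := by
        have h5 : d / (2 * lam) / 2 = d / (4 * lam) := by rw [div_div]; congr 1; ring
        linarith
      have hT : θ (lam * d / dist x z) ≤ θ (4 * lam ^ 2 * t) := by
        apply hθmono _ _ (by positivity)
        rw [div_le_iff₀ hxz0, hts]
        have h6 : 4 * lam ^ 2 * (dist x y / dist x z) * dist x z = 4 * lam ^ 2 * dist x y := by
          field_simp
        rw [h6]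
        nlinarith [mul_lt_mul_of_pos_left ((div_lt_iff₀ h4l).mp hxyd) hlam0]
      have hB := my_lemmaB f hf hθ0 hθmono hlam hd hd' hdiam hdiam' Z hsep hsep' hQM
        x z hxz (θ (4 * lam ^ 2 * t)) hT
      have h7 : dist (f x) (f y) / dist (f x) (f z) ≤
          lam + 4 * lam ^ 2 * θ (4 * lam ^ 2 * t) := by
        rw [div_le_iff₀ hfxz]
        have h6 : dist (f x) (f y) ≤ d' := hdiam' x y
        linarith
      have ht4 : 1 / (4 * lam) ≤ t := by
        have h8 : dist x y / d ≤ t := by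
          rw [hts]
          exact div_le_div_of_nonneg_left dist_nonneg hxz0 (hdiam x z)
        have h9 : 1 / (4 * lam) ≤ dist x y / d := by
          rw [div_le_div_iff₀ h4l hd]
          nlinarith [(div_lt_iff₀ h4l).mp hxyd]
        linarith
      have h10 : lam ≤ 4 * lam ^ 2 * t := by
        have h11 := mul_le_mul_of_nonneg_left ht4 (by positivity : (0:ℝ) ≤ 4 * lam ^ 2)
        have h12 : 4 * lam ^ 2 * (1 / (4 * lam)) = lam := by field_simp
        linarith
      linarith
end Main1

lemma my_prod_le {η : ℝ → ℝ} (hηmono : ∀ a b : ℝ, 0 ≤ a → a ≤ b → η a ≤ η b)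
    (hηnn : ∀ t : ℝ, 0 ≤ t → 0 ≤ η t)
    {s s' τ M R : ℝ} (hss' : s * s' = τ) (hsM : s ≤ M) (hs'M : s' ≤ M)
    (hsnn : 0 ≤ s) (hs'nn : 0 ≤ s') (hRnn : 0 ≤ R) (hR : R ≤ η s * η s') :
    R ≤ η (Real.sqrt τ) * η M := by
  rcases le_total s s' with h | h
  · have h1 : s ≤ Real.sqrt τ := by
      have h2 : s * s ≤ τ := by nlinarith
      calc s = Real.sqrt (s * s) := (Real.sqrt_mul_self hsnn).symm
        _ ≤ Real.sqrt τ := Real.sqrt_le_sqrt h2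
    calc R ≤ η s * η s' := hR
      _ ≤ η (Real.sqrt τ) * η M :=
        mul_le_mul (hηmono _ _ hsnn h1) (hηmono _ _ hs'nn hs'M) (hηnn _ hs'nn)
          (hηnn _ (hsnn.trans h1))
  · have h1 : s' ≤ Real.sqrt τ := by
      have h2 : s' * s' ≤ τ := by nlinarith
      calc s' = Real.sqrt (s' * s') := (Real.sqrt_mul_self hs'nn).symm
        _ ≤ Real.sqrt τ := Real.sqrt_le_sqrt h2
    calc R ≤ η s * η s' := hR
      _ = η s' * η s := by ring
      _ ≤ η (Real.sqrt τ) * η M :=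
        mul_le_mul (hηmono _ _ hs'nn h1) (hηmono _ _ hsnn hsM) (hηnn _ hsnn)
          (hηnn _ (hs'nn.trans h1))

section Part2
variable {X : Type*} {Y : Type*} [MetricSpace X] [MetricSpace Y]

set_option maxHeartbeats 1000000 in
lemma my_part2QM (f : X → Y) (hf : Function.Injective f)
    {η : ℝ → ℝ} (hη0 : η 0 = 0) (hηmono : ∀ a b : ℝ, 0 ≤ a → a ≤ b → η a ≤ η b)
    (hQS : ∀ x y z : X, x ≠ y → x ≠ z → y ≠ z →
      dist (f x) (f y) / dist (f x) (f z) ≤ η (dist x y / dist x z))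
    (a b c d : X) (hab : a ≠ b) (hac : a ≠ c) (had : a ≠ d)
    (hbc : b ≠ c) (hbd : b ≠ d) (hcd : c ≠ d) :
    dist (f a) (f c) * dist (f b) (f d) / (dist (f a) (f b) * dist (f c) (f d)) ≤
      η (Real.sqrt (dist a c * dist b d / (dist a b * dist c d))) *
        η (3 + 4 * (dist a c * dist b d / (dist a b * dist c d))) := by
  have hηnn : ∀ t : ℝ, 0 ≤ t → 0 ≤ η t := fun t ht => hη0 ▸ hηmono 0 t le_rfl ht
  have hAB : 0 < dist a b := dist_pos.mpr hab
  have hCD : 0 < dist c d := dist_pos.mpr hcd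
  have hAC : 0 < dist a c := dist_pos.mpr hac
  have hBD : 0 < dist b d := dist_pos.mpr hbd
  set τ := dist a c * dist b d / (dist a b * dist c d) with hτ
  have hτpos : 0 < τ := div_pos (mul_pos hAC hBD) (mul_pos hAB hCD)
  have htau : τ * (dist a b * dist c d) = dist a c * dist b d :=
    div_mul_cancel₀ _ (ne_of_gt (mul_pos hAB hCD))
  have t1 : dist a b ≤ dist a c + dist c d + dist b d := by
    have := dist_triangle4 a c d b
    rw [dist_comm d b] at this
    linarith
  have t2 : dist b d ≤ dist a b + dist a c + dist c d := by
    have := dist_triangle4 b a c d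
    rw [dist_comm b a] at this
    linarith
  have t3 : dist c d ≤ dist b d + dist a b + dist a c := by
    have := dist_triangle4 c a b d
    rw [dist_comm c a] at this
    linarith
  have t4 : dist a c ≤ dist c d + dist b d + dist a b := by
    have := dist_triangle4 a b d c
    rw [dist_comm d c] at this
    linarith
  have hRnn : 0 ≤ dist (f a) (f c) * dist (f b) (f d) /
      (dist (f a) (f b) * dist (f c) (f d)) := by positivity
  rcases my_K hAB hCD hAC hBD htau t1 t2 t3 t4 with ⟨hs, hs'⟩ | ⟨hu, hu'⟩
  · -- decomposition at vertices a and d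
    have hR : dist (f a) (f c) * dist (f b) (f d) / (dist (f a) (f b) * dist (f c) (f d)) ≤
        η (dist a c / dist a b) * η (dist b d / dist c d) := by
      have e1 : dist (f a) (f c) * dist (f b) (f d) / (dist (f a) (f b) * dist (f c) (f d)) =
          (dist (f a) (f c) / dist (f a) (f b)) * (dist (f b) (f d) / dist (f c) (f d)) :=
        (div_mul_div_comm _ _ _ _).symm
      rw [e1]
      have b1 : dist (f a) (f c) / dist (f a) (f b) ≤ η (dist a c / dist a b) :=
        hQS a c b hac hab (Ne.symm hbc)
      have b2 : dist (f b) (f d) / dist (f c) (f d) ≤ η (dist b d / dist c d) := by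
        have := hQS d b c (Ne.symm hbd) (Ne.symm hcd) hbc
        rw [dist_comm (f d) (f b), dist_comm (f d) (f c), dist_comm d b, dist_comm d c] at this
        exact this
      exact mul_le_mul b1 b2 (by positivity) (hηnn _ (by positivity))
    exact my_prod_le hηmono hηnn (by rw [hτ]; field_simp) hs hs' (by positivity) (by positivity)
      hRnn hR
  · -- decomposition at vertices b and c
    have hR : dist (f a) (f c) * dist (f b) (f d) / (dist (f a) (f b) * dist (f c) (f d)) ≤
        η (dist b d / dist a b) * η (dist a c / dist c d) := by
      have e1 : dist (f a) (f c) * dist (f b) (f d) / (dist (f a) (f b) * dist (f c) (f d)) =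
          (dist (f b) (f d) / dist (f a) (f b)) * (dist (f a) (f c) / dist (f c) (f d)) := by
        rw [div_mul_div_comm]; ring_nf
      rw [e1]
      have b1 : dist (f b) (f d) / dist (f a) (f b) ≤ η (dist b d / dist a b) := by
        have := hQS b d a hbd (Ne.symm hab) (Ne.symm had)
        rw [dist_comm (f b) (f a), dist_comm b a] at this
        exact this
      have b2 : dist (f a) (f c) / dist (f c) (f d) ≤ η (dist a c / dist c d) := by
        have := hQS c a d (Ne.symm hac) hcd had
        rw [dist_comm (f c) (f a), dist_comm c a] at this
        exact this
      exact mul_le_mul b1 b2 (by positivity) (hηnn _ (by positivity))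
    exact my_prod_le hηmono hηnn (by rw [hτ]; field_simp) hu hu' (by positivity)
      (by positivity) hRnn hR
end Part2



lemma my_ctrl_mono {θ : ℝ → ℝ} (h : CtrlFun θ) :
    ∀ a b : ℝ, 0 ≤ a → a ≤ b → θ a ≤ θ b := fun a b ha hab =>
  hab.lt_or_eq.elim (fun hl => (h.2.1 (Set.mem_Ici.mpr ha) (Set.mem_Ici.mpr (ha.trans hab)) hl).le)
    (fun he => he ▸ le_rfl)

lemma my_ctrl_nonneg {θ : ℝ → ℝ} (h : CtrlFun θ) : ∀ t : ℝ, 0 ≤ t → 0 ≤ θ t :=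
  fun t ht => h.1 ▸ my_ctrl_mono h 0 t le_rfl ht

lemma my_ctrl_pos {θ : ℝ → ℝ} (h : CtrlFun θ) : ∀ t : ℝ, 0 < t → 0 < θ t :=
  fun t ht => h.1 ▸ h.2.1 (Set.mem_Ici.mpr le_rfl) (Set.mem_Ici.mpr ht.le) ht

lemma my_ctrl1 {θ : ℝ → ℝ} {lam : ℝ} (hθ : CtrlFun θ) (hlam : 1 ≤ lam) :
    CtrlFun (fun t => 4 * lam ^ 2 * (θ (4 * lam ^ 2 * t) + t)) := by
  have hl0 : 0 < lam := lt_of_lt_of_le one_pos hlam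
  have hc : (0:ℝ) < 4 * lam ^ 2 := by positivity
  obtain ⟨h0, hmono, hcont, hsurj⟩ := hθ
  have hmono' := my_ctrl_mono ⟨h0, hmono, hcont, hsurj⟩
  have hnn := my_ctrl_nonneg ⟨h0, hmono, hcont, hsurj⟩
  refine ⟨by simp [h0], ?_, ?_, ?_⟩
  · intro a ha b hb hab
    rw [Set.mem_Ici] at ha hb
    simp only
    apply mul_lt_mul_of_pos_left _ hc
    have h1 : θ (4 * lam ^ 2 * a) ≤ θ (4 * lam ^ 2 * b) :=
      hmono' _ _ (mul_nonneg hc.le ha) (by nlinarith)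
    linarith
  · apply ContinuousOn.mul continuousOn_const
    apply ContinuousOn.add _ continuousOn_id
    exact hcont.comp (continuous_const.mul continuous_id).continuousOn
      (fun t ht => Set.mem_Ici.mpr (mul_nonneg hc.le (Set.mem_Ici.mp ht)))
  · intro y hy
    rw [Set.mem_Ici] at hy
    set T := y / (4 * lam ^ 2) with hT
    have hT0 : 0 ≤ T := by positivity
    have hval : y ≤ 4 * lam ^ 2 * (θ (4 * lam ^ 2 * T) + T) := by
      have h1 : 0 ≤ θ (4 * lam ^ 2 * T) := hnn _ (by positivity)
      have h2 : 4 * lam ^ 2 * T = y := by rw [hT]; field_simp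
      nlinarith
    have hcont2 : ContinuousOn (fun t => 4 * lam ^ 2 * (θ (4 * lam ^ 2 * t) + t))
        (Set.Icc 0 T) := by
      apply ContinuousOn.mono _ (Set.Icc_subset_Ici_self)
      apply ContinuousOn.mul continuousOn_const
      apply ContinuousOn.add _ continuousOn_id
      exact hcont.comp (continuous_const.mul continuous_id).continuousOn
        (fun t ht => Set.mem_Ici.mpr (mul_nonneg hc.le (Set.mem_Ici.mp ht)))
    have := intermediate_value_Icc hT0 hcont2
    have hmem : y ∈ Set.Icc (4 * lam ^ 2 * (θ (4 * lam ^ 2 * 0) + 0))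
        (4 * lam ^ 2 * (θ (4 * lam ^ 2 * T) + T)) := by
      constructor
      · simp [h0]; linarith
      · exact hval
    obtain ⟨t, htm, hteq⟩ := this hmem
    exact ⟨t, htm.1, hteq⟩

lemma my_ctrl2 {η : ℝ → ℝ} (hη : CtrlFun η) :
    CtrlFun (fun t => η (Real.sqrt t) * η (3 + 4 * t)) := by
  obtain ⟨h0, hmono, hcont, hsurj⟩ := hη
  have hη' : CtrlFun η := ⟨h0, hmono, hcont, hsurj⟩
  have hmono' := my_ctrl_mono hη'
  have hnn := my_ctrl_nonneg hη'
  have hpos := my_ctrl_pos hη'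
  have hcont2 : ContinuousOn (fun t => η (Real.sqrt t) * η (3 + 4 * t)) (Set.Ici 0) := by
    apply ContinuousOn.mul
    · exact hcont.comp Real.continuous_sqrt.continuousOn
        (fun t _ => Set.mem_Ici.mpr (Real.sqrt_nonneg t))
    · exact hcont.comp (continuous_const.add (continuous_const.mul continuous_id)).continuousOn
        (fun t ht => Set.mem_Ici.mpr (by have := Set.mem_Ici.mp ht; positivity))
  refine ⟨by simp [h0, Real.sqrt_zero], ?_, hcont2, ?_⟩
  · intro a ha b hb hab
    rw [Set.mem_Ici] at ha hb
    simp only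
    rcases eq_or_lt_of_le ha with h | h
    · rw [← h]
      have hb0 : 0 < b := by rw [← h] at hab; exact hab
      simp only [Real.sqrt_zero, h0, mul_zero, zero_mul]
      exact mul_pos (hpos _ (Real.sqrt_pos.mpr hb0)) (hpos _ (by linarith))
    · have h1 : η (Real.sqrt a) ≤ η (Real.sqrt b) :=
        hmono' _ _ (Real.sqrt_nonneg a) (Real.sqrt_le_sqrt hab.le)
      have h2 : η (3 + 4 * a) < η (3 + 4 * b) :=
        hmono (Set.mem_Ici.mpr (by linarith)) (Set.mem_Ici.mpr (by linarith)) (by linarith)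
      have h3 : 0 < η (Real.sqrt b) := hpos _ (Real.sqrt_pos.mpr (by linarith))
      have h4 : 0 ≤ η (3 + 4 * a) := hnn _ (by linarith)
      exact mul_lt_mul' h1 h2 h4 h3
  · intro y hy
    rw [Set.mem_Ici] at hy
    have hc3 : 0 < η 3 := hpos 3 (by norm_num)
    obtain ⟨s, hs, hes⟩ := hsurj (Set.mem_Ici.mpr (div_nonneg hy hc3.le) :
      y / η 3 ∈ Set.Ici (0:ℝ))
    rw [Set.mem_Ici] at hs
    have hval : y ≤ η (Real.sqrt (s * s)) * η (3 + 4 * (s * s)) := by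
      rw [Real.sqrt_mul_self hs, hes]
      have h1 : η 3 ≤ η (3 + 4 * (s * s)) := hmono' _ _ (by norm_num) (by nlinarith)
      calc y = y / η 3 * η 3 := by field_simp
        _ ≤ y / η 3 * η (3 + 4 * (s * s)) :=
            mul_le_mul_of_nonneg_left h1 (div_nonneg hy hc3.le)
    have := intermediate_value_Icc (by positivity : (0:ℝ) ≤ s * s)
      (hcont2.mono (Set.Icc_subset_Ici_self))
    have hmem : y ∈ Set.Icc (η (Real.sqrt 0) * η (3 + 4 * 0))
        (η (Real.sqrt (s * s)) * η (3 + 4 * (s * s))) := by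
      constructor
      · simp [Real.sqrt_zero, h0]; exact hy
      · exact hval
    obtain ⟨t, htm, hteq⟩ := this hmem
    exact ⟨t, htm.1, hteq⟩


section ThreePt
variable {X : Type*} {Y : Type*} [MetricSpace X] [MetricSpace Y]

set_option maxHeartbeats 1000000 in
lemma my_threept (hcX : ConnectedSpace X)
    (f : X → Y) (hfinj : Function.Injective f) (hfs : Function.Surjective f)
    {η : ℝ → ℝ} (hη0 : η 0 = 0) (hηmono : ∀ a b : ℝ, 0 ≤ a → a ≤ b → η a ≤ η b)
    (hbX : Bornology.IsBounded (Set.univ : Set X))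
    (hQS : ∀ x y z : X, x ≠ y → x ≠ z → y ≠ z →
      dist (f x) (f y) / dist (f x) (f z) ≤ η (dist x y / dist x z)) :
    ThreePointCond (max 4 (2 * (η 4 + 1))) f := by
  have hηnn : ∀ t : ℝ, 0 ≤ t → 0 ≤ η t := fun t ht => hη0 ▸ hηmono 0 t le_rfl ht
  have hη4 : 0 ≤ η 4 := hηnn 4 (by norm_num)
  set lam := max 4 (2 * (η 4 + 1)) with hlamdef
  have hlam4 : (4:ℝ) ≤ lam := le_max_left _ _
  have hlamK : 2 * (η 4 + 1) ≤ lam := le_max_right _ _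
  have hK0 : (0:ℝ) < 2 * (η 4 + 1) := by linarith
  have hlam0 : (0:ℝ) < lam := by linarith
  set d := Metric.diam (Set.univ : Set X) with hdd
  set d' := Metric.diam (Set.univ : Set Y) with hdd'
  by_cases hsing : ∀ u v : X, u = v
  · obtain ⟨x0⟩ := hcX.toNonempty
    have hdX : d = 0 := Metric.diam_subsingleton (fun u _ v _ => hsing u v)
    have hdY : d' = 0 := by
      apply Metric.diam_subsingleton
      intro y1 _ y2 _
      obtain ⟨u1, rfl⟩ := hfs y1
      obtain ⟨u2, rfl⟩ := hfs y2
      rw [hsing u1 u2]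
    refine ⟨x0, x0, x0, ?_, ?_⟩ <;>
      simp [hdX, hdY, ← hdd, ← hdd', zero_div, dist_self, le_refl, and_self]
  · push_neg at hsing
    obtain ⟨u0, v0, huv⟩ := hsing
    have hd : 0 < d :=
      lt_of_lt_of_le (dist_pos.mpr huv)
        (Metric.dist_le_diam_of_mem hbX (Set.mem_univ _) (Set.mem_univ _))
    have hdiam : ∀ u v : X, dist u v ≤ d :=
      fun u v => Metric.dist_le_diam_of_mem hbX (Set.mem_univ _) (Set.mem_univ _)
    obtain ⟨a, b, hab2⟩ : ∃ a b : X, d / 2 < dist a b := by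
      by_contra hc
      push_neg at hc
      have := Metric.diam_le_of_forall_dist_le (by linarith : (0:ℝ) ≤ d / 2)
        (fun x (_ : x ∈ Set.univ) y _ => hc x y)
      rw [← hdd] at this
      linarith
    have hivt : d / 4 ∈ Set.range (fun u => dist a u) := by
      letI := hcX
      apply intermediate_value_univ a b (continuous_const.dist continuous_id)
      refine ⟨?_, ?_⟩
      · show dist a a ≤ d / 4
        rw [dist_self]
        positivity
      · show d / 4 ≤ dist a b
        calc d / 4 ≤ d / 2 := by linarith
          _ ≤ dist a b := hab2.le
    obtain ⟨c, hc⟩ := hivt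
    simp only at hc
    -- domain separations
    have hs1 : d / 4 ≤ dist a b := by linarith
    have hs2 : d / 4 ≤ dist a c := by rw [hc]
    have hs3 : d / 4 ≤ dist b c := by
      have h4 := dist_triangle a c b
      rw [dist_comm c b] at h4
      linarith [hc]
    have hd4 : 0 < d / 4 := by linarith
    have hdlam : d / lam ≤ d / 4 :=
      div_le_div_of_nonneg_left hd.le (by norm_num) hlam4
    have hane : a ≠ b := fun h => by rw [h, dist_self] at hs1; linarith
    have hace : a ≠ c := fun h => by rw [h, dist_self] at hs2; linarith
    have hbce : b ≠ c := fun h => by rw [h, dist_self] at hs3; linarith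
    -- image separation for any pair with dist ≥ d/4
    have himg : ∀ p q : X, p ≠ q → d / 4 ≤ dist p q → d' / lam ≤ dist (f p) (f q) := by
      intro p q hpq hp4
      have hfpq : 0 < dist (f p) (f q) := dist_pos.mpr (fun h => hpq (hfinj h))
      have hbound : ∀ u : X, dist (f p) (f u) ≤ (η 4 + 1) * dist (f p) (f q) := by
        intro u
        by_cases hu : u = p
        · rw [hu, dist_self]; positivity
        by_cases hu2 : u = q
        · rw [hu2]
          exact le_mul_of_one_le_left dist_nonneg (by linarith)
        · have h5 := hQS p u q (fun h => hu h.symm) hpq (fun h => hu2 h)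
          have h6 : dist p u / dist p q ≤ 4 := by
            rw [div_le_iff₀ (lt_of_lt_of_le hd4 hp4)]
            have := hdiam p u
            linarith
          have h7 : η (dist p u / dist p q) ≤ η 4 := hηmono _ _ (by positivity) h6
          have h8 : dist (f p) (f u) ≤ η 4 * dist (f p) (f q) :=
            (div_le_iff₀ hfpq).mp (h5.trans h7)
          nlinarith
      have hdY : d' ≤ 2 * (η 4 + 1) * dist (f p) (f q) := by
        apply Metric.diam_le_of_forall_dist_le (by positivity)
        intro y1 _ y2 _
        obtain ⟨u1, rfl⟩ := hfs y1
        obtain ⟨u2, rfl⟩ := hfs y2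
        have h9 := dist_triangle (f u1) (f p) (f u2)
        have h10 := hbound u1
        have h11 := hbound u2
        rw [dist_comm (f p) (f u1)] at h10
        linarith
      calc d' / lam ≤ d' / (2 * (η 4 + 1)) :=
            div_le_div_of_nonneg_left Metric.diam_nonneg hK0 hlamK
        _ ≤ dist (f p) (f q) := by
            rw [div_le_iff₀ hK0]
            linarith
    refine ⟨a, b, c, ⟨hdlam.trans hs1, hdlam.trans hs2, hdlam.trans hs3⟩,
      himg a b hane hs1, himg a c hace hs2, himg b c hbce hs3⟩
end ThreePt


set_option maxHeartbeats 1000000 in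
theorem stmt_1 :
    (∀ (θ : ℝ → ℝ) (lam : ℝ), CtrlFun θ → 1 ≤ lam →
      ∃ η : ℝ → ℝ, CtrlFun η ∧
        ∀ (X : Type u) (Y : Type v) [MetricSpace X] [MetricSpace Y] (f : X ≃ₜ Y),
          Bornology.IsBounded (Set.univ : Set X) →
          Bornology.IsBounded (Set.univ : Set Y) →
          ConnectedSpace X → ConnectedSpace Y →
          QMOn θ (⇑f) Set.univ → ThreePointCond lam (⇑f) →
          QSOn η (⇑f) Set.univ) ∧
    (∀ η : ℝ → ℝ, CtrlFun η →
      ∃ (θ : ℝ → ℝ) (lam : ℝ), CtrlFun θ ∧ 1 ≤ lam ∧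
        ∀ (X : Type u) (Y : Type v) [MetricSpace X] [MetricSpace Y] (f : X ≃ₜ Y),
          Bornology.IsBounded (Set.univ : Set X) →
          Bornology.IsBounded (Set.univ : Set Y) →
          ConnectedSpace X → ConnectedSpace Y →
          QSOn η (⇑f) Set.univ →
          QMOn θ (⇑f) Set.univ ∧ ThreePointCond lam (⇑f)) := by
  constructor
  · -- Part 1: QM + three-point ⇒ QS
    intro θ lam hθ hlam
    refine ⟨fun t => 4 * lam ^ 2 * (θ (4 * lam ^ 2 * t) + t), my_ctrl1 hθ hlam, ?_⟩
    intro X Y _ _ f hbX hbY hcX hcY hQM h3pt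
    intro x _ y _ z _ hxy hxz hyz
    obtain ⟨z₁, z₂, z₃, ⟨e12, e13, e23⟩, i12, i13, i23⟩ := h3pt
    have hfinj : Function.Injective f := f.injective
    have hd : 0 < Metric.diam (Set.univ : Set X) :=
      lt_of_lt_of_le (dist_pos.mpr hxy)
        (Metric.dist_le_diam_of_mem hbX (Set.mem_univ _) (Set.mem_univ _))
    have hd' : 0 < Metric.diam (Set.univ : Set Y) :=
      lt_of_lt_of_le (dist_pos.mpr (fun h => hxy (hfinj h)))
        (Metric.dist_le_diam_of_mem hbY (Set.mem_univ _) (Set.mem_univ _))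
    set Z : Fin 3 → X := ![z₁, z₂, z₃] with hZdef
    have hsep : ∀ i j : Fin 3, i ≠ j →
        Metric.diam (Set.univ : Set X) / lam ≤ dist (Z i) (Z j) := by
      intro i j hij
      fin_cases i <;> fin_cases j <;>
        first
          | exact absurd rfl hij
          | simpa [hZdef, dist_comm] using e12
          | simpa [hZdef, dist_comm] using e13
          | simpa [hZdef, dist_comm] using e23
    have hsep' : ∀ i j : Fin 3, i ≠ j →
        Metric.diam (Set.univ : Set Y) / lam ≤ dist (f (Z i)) (f (Z j)) := by
      intro i j hij
      fin_cases i <;> fin_cases j <;>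
        first
          | exact absurd rfl hij
          | simpa [hZdef, dist_comm] using i12
          | simpa [hZdef, dist_comm] using i13
          | simpa [hZdef, dist_comm] using i23
    have hQMraw : ∀ a b c w : X, a ≠ b → a ≠ c → a ≠ w → b ≠ c → b ≠ w → c ≠ w →
        dist (f a) (f c) * dist (f b) (f w) / (dist (f a) (f b) * dist (f c) (f w)) ≤
          θ (dist a c * dist b w / (dist a b * dist c w)) := by
      intro a b c w h1 h2 h3 h4 h5 h6
      simpa [crRatio] using
        hQM a (Set.mem_univ _) b (Set.mem_univ _) c (Set.mem_univ _) w (Set.mem_univ _)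
          h1 h2 h3 h4 h5 h6
    exact my_part1 f hfinj hθ.1 (my_ctrl_mono hθ) hlam hd hd'
      (fun u v => Metric.dist_le_diam_of_mem hbX (Set.mem_univ _) (Set.mem_univ _))
      (fun u v => Metric.dist_le_diam_of_mem hbY (Set.mem_univ _) (Set.mem_univ _))
      Z hsep hsep' hQMraw x y z hxy hxz hyz
  · -- Part 2: QS ⇒ QM + three-point
    intro η hη
    refine ⟨fun t => η (Real.sqrt t) * η (3 + 4 * t), max 4 (2 * (η 4 + 1)),
      my_ctrl2 hη, ?_, ?_⟩
    · calc (1:ℝ) ≤ 4 := by norm_num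
        _ ≤ max 4 (2 * (η 4 + 1)) := le_max_left _ _
    intro X Y _ _ f hbX hbY hcX hcY hQS
    have hQSraw : ∀ x y z : X, x ≠ y → x ≠ z → y ≠ z →
        dist (f x) (f y) / dist (f x) (f z) ≤ η (dist x y / dist x z) :=
      fun x y z hxy hxz hyz =>
        hQS x (Set.mem_univ _) y (Set.mem_univ _) z (Set.mem_univ _) hxy hxz hyz
    constructor
    · intro a _ b _ c _ w _ h1 h2 h3 h4 h5 h6
      simpa [crRatio] using
        my_part2QM f f.injective hη.1 (my_ctrl_mono hη) hQSraw a b c w h1 h2 h3 h4 h5 h6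
    · exact my_threept hcX f f.injective f.surjective hη.1 (my_ctrl_mono hη) hbX hQSraw
end B
end
end

section
/- Let f : X → Y be an η-quasisymmetric embedding of metric spaces. Then for every quadruple of distinct points x, y, z, w ∈ X one has ⟨f(x),f(y),f(z),f(w)⟩ ≤ η(⟨x,y,z,w⟩). Consequently, every η-quasisymmetric homeomorphism between metric spaces is θ-quasimöbius with θ depending only on η. -/
open Set Metric Topology

noncomputable section

universe u v w

/-! ### Auxiliary lemmas for `stmt_2` -/

section Stmt2Aux

lemma ctrl_nonneg {η : ℝ → ℝ} (hη : CtrlFun η) {t : ℝ} (ht : 0 ≤ t) : 0 ≤ η t := by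
  rcases eq_or_lt_of_le ht with h | h
  · rw [← h, hη.1]
  · rw [← hη.1]
    exact (hη.2.1 (Set.mem_Ici.mpr le_rfl) (Set.mem_Ici.mpr ht) h).le

lemma ctrl_mono {η : ℝ → ℝ} (hη : CtrlFun η) {s t : ℝ} (hs : 0 ≤ s) (hst : s ≤ t) :
    η s ≤ η t :=
  hη.2.1.monotoneOn (Set.mem_Ici.mpr hs) (Set.mem_Ici.mpr (hs.trans hst)) hst

lemma bkRatio_perm {X : Type*} [MetricSpace X] (x y z w : X) :
    bkRatio z w x y = bkRatio x y z w := by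
  unfold bkRatio
  rw [dist_comm z x, dist_comm w y, min_comm (dist z w) (dist x y)]

lemma crRatio_perm1 {X : Type*} [MetricSpace X] (x y z w : X) :
    crRatio y x w z = crRatio x y z w := by
  unfold crRatio
  rw [dist_comm y x, dist_comm w z]
  ring

lemma crRatio_perm2 {X : Type*} [MetricSpace X] (x y z w : X) :
    crRatio z w x y = crRatio x y z w := by
  unfold crRatio
  rw [dist_comm z x, dist_comm w y]
  ring

lemma crRatio_perm3 {X : Type*} [MetricSpace X] (x y z w : X) :
    crRatio w z y x = crRatio x y z w := by
  unfold crRatio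
  rw [dist_comm w y, dist_comm z x, dist_comm w z, dist_comm y x]
  ring

lemma part1_core {X : Type u} {Y : Type v} [MetricSpace X] [MetricSpace Y]
    (f : X → Y) (η : ℝ → ℝ) (hη : CtrlFun η) (hf : Function.Injective f)
    (hqs : QSOn η f Set.univ) (x y z w : X)
    (hxy : x ≠ y) (hxz : x ≠ z) (hxw : x ≠ w) (hyz : y ≠ z) (hyw : y ≠ w) (hzw : z ≠ w)
    (hcd : dist x y ≤ dist z w) :
    bkRatio (f x) (f y) (f z) (f w) ≤ η (bkRatio x y z w) := by
  have pc : (0:ℝ) < dist x y := dist_pos.mpr hxy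
  have pd : (0:ℝ) < dist z w := dist_pos.mpr hzw
  have pc' : (0:ℝ) < dist (f x) (f y) := dist_pos.mpr fun h => hxy (hf h)
  have pd' : (0:ℝ) < dist (f z) (f w) := dist_pos.mpr fun h => hzw (hf h)
  have hmab : 0 ≤ min (dist x z) (dist y w) := le_min dist_nonneg dist_nonneg
  unfold bkRatio
  rw [min_eq_left hcd]
  rcases le_total (dist (f x) (f y)) (dist (f z) (f w)) with h' | h'
  · rw [min_eq_left h']
    rcases le_total (dist x z) (dist y w) with hab | hab
    · rw [min_eq_left hab]
      have h1 := hqs x (Set.mem_univ _) z (Set.mem_univ _) y (Set.mem_univ _)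
        hxz hxy hyz.symm
      calc min (dist (f x) (f z)) (dist (f y) (f w)) / dist (f x) (f y)
          ≤ dist (f x) (f z) / dist (f x) (f y) := by
            gcongr
            exact min_le_left _ _
        _ ≤ η (dist x z / dist x y) := h1
    · rw [min_eq_right hab]
      have h2 := hqs y (Set.mem_univ _) w (Set.mem_univ _) x (Set.mem_univ _)
        hyw hxy.symm hxw.symm
      rw [dist_comm (f y) (f x), dist_comm y x] at h2
      calc min (dist (f x) (f z)) (dist (f y) (f w)) / dist (f x) (f y)
          ≤ dist (f y) (f w) / dist (f x) (f y) := by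
            gcongr
            exact min_le_right _ _
        _ ≤ η (dist y w / dist x y) := h2
  · rw [min_eq_right h']
    have key : min (dist (f x) (f z)) (dist (f y) (f w)) / dist (f z) (f w)
        ≤ η (min (dist x z) (dist y w) / dist z w) := by
      rcases le_total (dist x z) (dist y w) with hab | hab
      · rw [min_eq_left hab]
        have h3 := hqs z (Set.mem_univ _) x (Set.mem_univ _) w (Set.mem_univ _)
          hxz.symm hzw hxw
        rw [dist_comm (f z) (f x), dist_comm z x] at h3
        calc min (dist (f x) (f z)) (dist (f y) (f w)) / dist (f z) (f w)
            ≤ dist (f x) (f z) / dist (f z) (f w) := by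
              gcongr
              exact min_le_left _ _
          _ ≤ η (dist x z / dist z w) := h3
      · rw [min_eq_right hab]
        have h4 := hqs w (Set.mem_univ _) y (Set.mem_univ _) z (Set.mem_univ _)
          hyw.symm hzw.symm hyz
        rw [dist_comm (f w) (f y), dist_comm (f w) (f z), dist_comm w y,
          dist_comm w z] at h4
        calc min (dist (f x) (f z)) (dist (f y) (f w)) / dist (f z) (f w)
            ≤ dist (f y) (f w) / dist (f z) (f w) := by
              gcongr
              exact min_le_right _ _
          _ ≤ η (dist y w / dist z w) := h4
    refine key.trans (ctrl_mono hη (div_nonneg hmab pd.le) ?_)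
    gcongr

/-- The explicit control function for quasimöbiusness. -/
def thetaOf (η : ℝ → ℝ) : ℝ → ℝ :=
  fun t => (η 1 + η 3) * (η (3 * t) + η (Real.sqrt t)) + η t ^ 2

lemma thetaOf_ctrl {η : ℝ → ℝ} (hη : CtrlFun η) : CtrlFun (thetaOf η) := by
  obtain ⟨h0, hsm, hcont, hsurj⟩ := hη
  have hη' : CtrlFun η := ⟨h0, hsm, hcont, hsurj⟩
  have h1pos : 0 < η 1 := by
    rw [← h0]
    exact hsm (Set.mem_Ici.mpr le_rfl) (Set.mem_Ici.mpr zero_le_one) one_pos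
  have h3nn : 0 ≤ η 3 := ctrl_nonneg hη' (by norm_num)
  have hθ0 : thetaOf η 0 = 0 := by
    simp [thetaOf, h0]
  have hc : ContinuousOn (thetaOf η) (Set.Ici 0) := by
    have c1 : ContinuousOn (fun r : ℝ => η (3 * r)) (Set.Ici 0) :=
      hcont.comp (continuousOn_const.mul continuousOn_id)
        (fun r hr => Set.mem_Ici.mpr (mul_nonneg (by norm_num) (Set.mem_Ici.mp hr)))
    have c2 : ContinuousOn (fun r : ℝ => η (Real.sqrt r)) (Set.Ici 0) :=
      hcont.comp Real.continuous_sqrt.continuousOn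
        (fun r _ => Set.mem_Ici.mpr (Real.sqrt_nonneg r))
    have c3 : ContinuousOn (fun r : ℝ => η r ^ 2) (Set.Ici 0) := hcont.pow 2
    exact (continuousOn_const.mul (c1.add c2)).add c3
  refine ⟨hθ0, ?_, hc, ?_⟩
  · intro s hs t ht hst
    have hs0 : (0:ℝ) ≤ s := hs
    have ht0 : (0:ℝ) ≤ t := ht
    have hA : η (3 * s) < η (3 * t) :=
      hsm (Set.mem_Ici.mpr (by positivity)) (Set.mem_Ici.mpr (by positivity))
        (by linarith)
    have hB : η (Real.sqrt s) < η (Real.sqrt t) :=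
      hsm (Set.mem_Ici.mpr (Real.sqrt_nonneg s)) (Set.mem_Ici.mpr (Real.sqrt_nonneg t))
        (Real.sqrt_lt_sqrt hs0 hst)
    have hCs : 0 ≤ η s := ctrl_nonneg hη' hs0
    have hC : η s < η t := hsm (Set.mem_Ici.mpr hs0) (Set.mem_Ici.mpr ht0) hst
    have hpos : 0 < η 1 + η 3 := by linarith
    have hmul := mul_lt_mul_of_pos_left (add_lt_add hA hB) hpos
    simp only [thetaOf]
    nlinarith
  · intro y hy
    have hy0 : (0:ℝ) ≤ y := hy
    obtain ⟨s, hs, hys⟩ := hsurj (Set.mem_Ici.mpr (le_max_of_le_right zero_le_one) :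
      max y 1 ∈ Set.Ici 0)
    have hs0 : (0:ℝ) ≤ s := hs
    have h1s : 1 ≤ η s := by rw [hys]; exact le_max_right _ _
    have hys' : y ≤ η s := by rw [hys]; exact le_max_left _ _
    have hθs : y ≤ thetaOf η s := by
      have n1 : 0 ≤ η (3 * s) := ctrl_nonneg hη' (by positivity)
      have n2 : 0 ≤ η (Real.sqrt s) := ctrl_nonneg hη' (Real.sqrt_nonneg s)
      simp only [thetaOf]
      nlinarith
    have hic : Set.Icc (thetaOf η 0) (thetaOf η s) ⊆ thetaOf η '' Set.Icc 0 s :=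
      intermediate_value_Icc hs0 (hc.mono Set.Icc_subset_Ici_self)
    obtain ⟨r, hr, hry⟩ := hic ⟨by rw [hθ0]; exact hy0, hθs⟩
    exact ⟨r, Set.Icc_subset_Ici_self hr, hry⟩

set_option maxHeartbeats 1000000 in
lemma part2_arith {η : ℝ → ℝ} (hη : CtrlFun η) {a b c d P : ℝ}
    (pa : 0 < a) (pb : 0 < b) (pc : 0 < c) (pd : 0 < d)
    (hab : a ≤ b) (hcd : c ≤ d)
    (htri : d ≤ a + c + b) (htri2 : b ≤ c + a + d)
    (hP : P ≤ η (a / c) * η (b / d)) :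
    P ≤ thetaOf η (a * b / (c * d)) := by
  set u : ℝ := a / c with hu_def
  set v : ℝ := b / d with hv_def
  set t : ℝ := a * b / (c * d) with ht_def
  have hu : 0 < u := div_pos pa pc
  have hv : 0 < v := div_pos pb pd
  have ht : 0 < t := div_pos (by positivity) (by positivity)
  have huv : u * v = t := by
    rw [hu_def, hv_def, ht_def, div_mul_div_comm]
  have n1 : 0 ≤ η 1 := ctrl_nonneg hη zero_le_one
  have n3 : 0 ≤ η 3 := ctrl_nonneg hη (by norm_num)
  have nt : 0 ≤ η t := ctrl_nonneg hη ht.le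
  have n3t : 0 ≤ η (3 * t) := ctrl_nonneg hη (by positivity)
  have nst : 0 ≤ η (Real.sqrt t) := ctrl_nonneg hη (Real.sqrt_nonneg t)
  have ht3t : η t ≤ η (3 * t) := ctrl_mono hη ht.le (by linarith)
  simp only [thetaOf]
  rcases le_or_gt 1 v with hv1 | hv1
  · -- v ≥ 1
    have hut : u ≤ t := by
      have := le_mul_of_one_le_right hu.le hv1
      rwa [huv] at this
    rcases le_or_gt a d with had | had
    · -- b ≤ 3 d, so v ≤ 3 ; u ≤ t
      have hv3 : v ≤ 3 := by
        rw [hv_def, div_le_iff₀ pd]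
        linarith
      have hb1 : η u ≤ η t := ctrl_mono hη hu.le hut
      have hb2 : η v ≤ η 3 := ctrl_mono hη hv.le hv3
      have : η u * η v ≤ η t * η 3 :=
        mul_le_mul hb1 hb2 (ctrl_nonneg hη hv.le) nt
      nlinarith [mul_le_mul_of_nonneg_right ht3t n3, mul_nonneg n1 n3t,
        mul_nonneg n1 nst, mul_nonneg n3 nst, sq_nonneg (η t)]
    · -- u > 1 too, so both ≤ t
      have hu1 : 1 < u := by
        rw [hu_def, lt_div_iff₀ pc]
        linarith
      have hvt : v ≤ t := by
        have := le_mul_of_one_le_left hv.le hu1.le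
        rwa [huv] at this
      have hb1 : η u ≤ η t := ctrl_mono hη hu.le hut
      have hb2 : η v ≤ η t := ctrl_mono hη hv.le hvt
      have : η u * η v ≤ η t * η t :=
        mul_le_mul hb1 hb2 (ctrl_nonneg hη hv.le) nt
      nlinarith [mul_nonneg n1 n3t, mul_nonneg n1 nst, mul_nonneg n3 n3t,
        mul_nonneg n3 nst]
  · rcases le_or_gt u 1 with hu1 | hu1
    · -- both u, v ≤ 1
      rcases le_total u v with huvle | huvle
      · have hus : u ≤ Real.sqrt t := by
          have h2 : u * u ≤ t := by
            have := mul_le_mul_of_nonneg_left huvle hu.le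
            rwa [huv] at this
          calc u = Real.sqrt (u * u) := (Real.sqrt_mul_self hu.le).symm
            _ ≤ Real.sqrt t := Real.sqrt_le_sqrt h2
        have hb1 : η u ≤ η (Real.sqrt t) := ctrl_mono hη hu.le hus
        have hb2 : η v ≤ η 1 := ctrl_mono hη hv.le hv1.le
        have : η u * η v ≤ η (Real.sqrt t) * η 1 :=
          mul_le_mul hb1 hb2 (ctrl_nonneg hη hv.le) nst
        nlinarith [mul_nonneg n1 n3t, mul_nonneg n3 n3t, mul_nonneg n3 nst,
          sq_nonneg (η t)]
      · have hvs : v ≤ Real.sqrt t := by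
          have h2 : v * v ≤ t := by
            have := mul_le_mul_of_nonneg_right huvle hv.le
            rwa [huv] at this
          calc v = Real.sqrt (v * v) := (Real.sqrt_mul_self hv.le).symm
            _ ≤ Real.sqrt t := Real.sqrt_le_sqrt h2
        have hb1 : η u ≤ η 1 := ctrl_mono hη hu.le hu1
        have hb2 : η v ≤ η (Real.sqrt t) := ctrl_mono hη hv.le hvs
        have : η u * η v ≤ η 1 * η (Real.sqrt t) :=
          mul_le_mul hb1 hb2 (ctrl_nonneg hη hv.le) n1
        nlinarith [mul_nonneg n1 n3t, mul_nonneg n3 n3t, mul_nonneg n3 nst,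
          sq_nonneg (η t)]
    · -- u > 1, v < 1 : then c < a ≤ b, d ≤ 3 b, v ≥ 1/3, u ≤ 3 t
      have hca : c < a := by
        have := (one_lt_div pc).mp hu1
        exact this
      have hv13 : 1 / 3 ≤ v := by
        rw [hv_def, le_div_iff₀ pd]
        linarith
      have hu3t : u ≤ 3 * t := by
        have := mul_le_mul_of_nonneg_left hv13 hu.le
        rw [huv] at this
        linarith
      have hb1 : η u ≤ η (3 * t) := ctrl_mono hη hu.le hu3t
      have hb2 : η v ≤ η 1 := ctrl_mono hη hv.le hv1.le
      have : η u * η v ≤ η (3 * t) * η 1 :=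
        mul_le_mul hb1 hb2 (ctrl_nonneg hη hv.le) n3t
      nlinarith [mul_nonneg n1 nst, mul_nonneg n3 n3t, mul_nonneg n3 nst,
        sq_nonneg (η t)]

lemma part2_core {X : Type u} {Y : Type v} [MetricSpace X] [MetricSpace Y]
    (f : X → Y) (η : ℝ → ℝ) (hη : CtrlFun η) (hf : Function.Injective f)
    (hqs : QSOn η f Set.univ) (x y z w : X)
    (hxy : x ≠ y) (hxz : x ≠ z) (hxw : x ≠ w) (hyz : y ≠ z) (hyw : y ≠ w) (hzw : z ≠ w)
    (hab : dist x z ≤ dist y w) (hcd : dist x y ≤ dist z w) :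
    crRatio (f x) (f y) (f z) (f w) ≤ thetaOf η (crRatio x y z w) := by
  have pa : (0:ℝ) < dist x z := dist_pos.mpr hxz
  have pb : (0:ℝ) < dist y w := dist_pos.mpr hyw
  have pc : (0:ℝ) < dist x y := dist_pos.mpr hxy
  have pd : (0:ℝ) < dist z w := dist_pos.mpr hzw
  have h1 : dist (f x) (f z) / dist (f x) (f y) ≤ η (dist x z / dist x y) :=
    hqs x (Set.mem_univ _) z (Set.mem_univ _) y (Set.mem_univ _) hxz hxy hyz.symm
  have h2 : dist (f y) (f w) / dist (f z) (f w) ≤ η (dist y w / dist z w) := by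
    have := hqs w (Set.mem_univ _) y (Set.mem_univ _) z (Set.mem_univ _)
      hyw.symm hzw.symm hyz
    rwa [dist_comm (f w) (f y), dist_comm (f w) (f z), dist_comm w y, dist_comm w z]
      at this
  have htri : dist z w ≤ dist x z + dist x y + dist y w := by
    have := dist_triangle4 z x y w
    rwa [dist_comm z x] at this
  have htri2 : dist y w ≤ dist x y + dist x z + dist z w := by
    have := dist_triangle4 y x z w
    rwa [dist_comm y x] at this
  have hP : crRatio (f x) (f y) (f z) (f w)
      ≤ η (dist x z / dist x y) * η (dist y w / dist z w) := by
    have heq : crRatio (f x) (f y) (f z) (f w)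
        = (dist (f x) (f z) / dist (f x) (f y)) *
          (dist (f y) (f w) / dist (f z) (f w)) := by
      unfold crRatio
      rw [div_mul_div_comm]
    rw [heq]
    exact mul_le_mul h1 h2 (div_nonneg dist_nonneg dist_nonneg)
      (ctrl_nonneg hη (div_nonneg dist_nonneg dist_nonneg))
  have := part2_arith hη pa pb pc pd hab hcd htri htri2 hP
  unfold crRatio
  exact this

end Stmt2Aux


theorem stmt_2 :
    (∀ (X : Type u) (Y : Type v) [MetricSpace X] [MetricSpace Y]
      (f : X → Y) (η : ℝ → ℝ), CtrlFun η → Function.Injective f →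
      QSOn η f Set.univ →
      ∀ x y z w : X, x ≠ y → x ≠ z → x ≠ w → y ≠ z → y ≠ w → z ≠ w →
        bkRatio (f x) (f y) (f z) (f w) ≤ η (bkRatio x y z w)) ∧
    (∀ η : ℝ → ℝ, CtrlFun η →
      ∃ θ : ℝ → ℝ, CtrlFun θ ∧
        ∀ (X : Type u) (Y : Type v) [MetricSpace X] [MetricSpace Y] (f : X ≃ₜ Y),
          QSOn η (⇑f) Set.univ → QMOn θ (⇑f) Set.univ) := by
  constructor
  · intro X Y _ _ f η hη hf hqs x y z w hxy hxz hxw hyz hyw hzw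
    rcases le_total (dist x y) (dist z w) with h | h
    · exact part1_core f η hη hf hqs x y z w hxy hxz hxw hyz hyw hzw h
    · have := part1_core f η hη hf hqs z w x y hzw hxz.symm hyz.symm hxw.symm
        hyw.symm hxy h
      rwa [bkRatio_perm (f x) (f y) (f z) (f w), bkRatio_perm x y z w] at this
  · intro η hη
    refine ⟨thetaOf η, thetaOf_ctrl hη, ?_⟩
    intro X Y _ _ f hqs
    intro x _ y _ z _ w _ hxy hxz hxw hyz hyw hzw
    have hf : Function.Injective (⇑f) := f.injective
    rcases le_total (dist x z) (dist y w) with hab | hab <;>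
      rcases le_total (dist x y) (dist z w) with hcd | hcd
    · exact part2_core (⇑f) η hη hf hqs x y z w hxy hxz hxw hyz hyw hzw hab hcd
    · have := part2_core (⇑f) η hη hf hqs z w x y hzw hxz.symm hyz.symm hxw.symm
        hyw.symm hxy (by rwa [dist_comm z x, dist_comm w y]) hcd
      rwa [crRatio_perm2 (f x) (f y) (f z) (f w), crRatio_perm2 x y z w] at this
    · have := part2_core (⇑f) η hη hf hqs y x w z hxy.symm hyw hyz hxw hxz hzw.symm
        hab (by rwa [dist_comm y x, dist_comm w z])
      rwa [crRatio_perm1 (f x) (f y) (f z) (f w), crRatio_perm1 x y z w] at this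
    · have := part2_core (⇑f) η hη hf hqs w z y x hzw.symm hyw.symm hxw.symm
        hyz.symm hxz.symm hxy.symm
        (by rwa [dist_comm w y, dist_comm z x]) (by rwa [dist_comm w z, dist_comm y x])
      rwa [crRatio_perm3 (f x) (f y) (f z) (f w), crRatio_perm3 x y z w] at this
end
end

section
/- Let Y be a bounded connected metric space and let a, b ∈ Y. Then there exists a point c ∈ Y such that dist(c, a) ≥ diam(Y)/6 and dist(c, b) ≥ diam(Y)/6. -/
open Set Metric Topology

noncomputable section

universe u v w

theorem stmt_3 (Y : Type u) [MetricSpace Y] [ConnectedSpace Y]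
    (hY : Bornology.IsBounded (Set.univ : Set Y)) (a b : Y) :
    ∃ c : Y, Metric.diam (Set.univ : Set Y) / 6 ≤ dist c a ∧
      Metric.diam (Set.univ : Set Y) / 6 ≤ dist c b := by
  set d := Metric.diam (Set.univ : Set Y) with hd
  have hf : Continuous fun x : Y => dist x a := continuous_id.dist continuous_const
  have hd0 : (0:ℝ) ≤ d := Metric.diam_nonneg
  by_cases hs : d / 3 ≤ dist a b
  · have h1 : dist b a - d / 6 ∈ Set.Icc (dist a a) (dist b a) := by
      rw [dist_comm b a]
      constructor
      · simp only [dist_self]; linarith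
      · linarith
    obtain ⟨c, hc⟩ := intermediate_value_univ a b hf h1
    have hc' : dist c a = dist b a - d / 6 := hc
    rw [dist_comm b a] at hc'
    refine ⟨c, ?_, ?_⟩
    · linarith
    · have ht := dist_triangle a c b
      rw [dist_comm a c] at ht
      linarith
  · push_neg at hs
    have hab : (0:ℝ) ≤ dist a b := dist_nonneg
    have hd0' : (0:ℝ) < d := by linarith
    obtain ⟨r, hr⟩ : ∃ r : Y, dist a b + d / 6 ≤ dist r a := by
      by_contra h
      push_neg at h
      have hle : d ≤ 2 * (dist a b + d / 6) := by
        apply Metric.diam_le_of_forall_dist_le (by positivity)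
        intro x _ y _
        have h1 := h x
        have h2 := h y
        have := dist_triangle x a y
        rw [dist_comm a y] at this
        linarith
      linarith
    have h1 : dist a b + d / 6 ∈ Set.Icc (dist a a) (dist r a) := by
      constructor
      · simp only [dist_self]; positivity
      · exact hr
    obtain ⟨c, hc⟩ := intermediate_value_univ a r hf h1
    have hc' : dist c a = dist a b + d / 6 := hc
    refine ⟨c, ?_, ?_⟩
    · linarith
    · have ht := dist_triangle c b a
      rw [dist_comm b a] at ht
      linarith
end
end

section
/- Let E be a real Banach space of dimension at least 2 and let D ⊂ E be a nonempty bounded domain. Then for any z₁, z₂ ∈ ∂D there exists z₃ ∈ ∂D such that min(|z₃ − z₁|, |z₃ − z₂|) ≥ diam(D)/6. -/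
open Set Metric Topology

noncomputable section

universe u v w

section AuxStmt5

variable {E : Type u} [NormedAddCommGroup E] [NormedSpace ℝ E]

/-- Every ray from a point of a bounded set hits the frontier. -/
lemma aux_exit_ray {D : Set E} (hbd : Bornology.IsBounded D) {x : E} (hx : x ∈ D)
    {u : E} (hu : u ≠ 0) : ∃ t : ℝ, 0 ≤ t ∧ x + t • u ∈ frontier D := by
  obtain ⟨R, hR⟩ := hbd.subset_ball x
  have hunorm : 0 < ‖u‖ := norm_pos_iff.2 hu
  set S : Set ℝ := {s : ℝ | 0 ≤ s ∧ x + s • u ∉ D} with hSdef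
  have hSne : S.Nonempty := by
    refine ⟨(|R| + 1) / ‖u‖, div_nonneg (by positivity) hunorm.le, fun hmem => ?_⟩
    have h1 := hR hmem
    rw [mem_ball, dist_eq_norm] at h1
    have h2 : x + ((|R| + 1) / ‖u‖) • u - x = ((|R| + 1) / ‖u‖) • u := by abel
    rw [h2, norm_smul, Real.norm_eq_abs, abs_of_nonneg (by positivity),
      div_mul_cancel₀ _ hunorm.ne'] at h1
    have := le_abs_self R
    linarith
  have hSbdd : BddBelow S := ⟨0, fun s hs => hs.1⟩
  set t := sInf S with ht
  have ht0 : 0 ≤ t := le_csInf hSne fun s hs => hs.1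
  refine ⟨t, ht0, ?_⟩
  have hcont : Continuous fun s : ℝ => x + s • u := by continuity
  rw [frontier_eq_closure_inter_closure]
  constructor
  · rcases eq_or_lt_of_le ht0 with h0 | hpos
    · have : x + t • u = x := by rw [← h0]; simp
      rw [this]; exact subset_closure hx
    · have himg : (fun s : ℝ => x + s • u) '' (Set.Ico 0 t) ⊆ D := by
        rintro _ ⟨s, hs, rfl⟩
        by_contra hnot
        exact absurd (csInf_le hSbdd ⟨hs.1, hnot⟩) (not_le.2 hs.2)
      have htcl : t ∈ closure (Set.Ico (0:ℝ) t) := by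
        rw [closure_Ico hpos.ne]; exact ⟨ht0, le_refl t⟩
      exact closure_mono himg
        (image_closure_subset_closure_image hcont ⟨t, htcl, rfl⟩)
  · have htclS : t ∈ closure S := csInf_mem_closure hSne hSbdd
    have himg : (fun s : ℝ => x + s • u) '' S ⊆ Dᶜ := by
      rintro _ ⟨s, hs, rfl⟩; exact hs.2
    exact closure_mono himg
      (image_closure_subset_closure_image hcont ⟨t, htclS, rfl⟩)

/-- There are frontier points nearly realizing the diameter. -/
lemma aux_far_frontier {D : Set E} (hbd : Bornology.IsBounded D) {c : ℝ}
    (hc : 0 < c) (hlt : c < Metric.diam D) :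
    ∃ p ∈ frontier D, ∃ q ∈ frontier D, c ≤ dist p q := by
  have hne : ¬ ∀ x ∈ D, ∀ y ∈ D, dist x y ≤ c := by
    intro h
    exact absurd (Metric.diam_le_of_forall_dist_le hc.le h) (not_le.2 hlt)
  push_neg at hne
  obtain ⟨x, hx, y, hy, hxy⟩ := hne
  have hu : y - x ≠ 0 := by
    intro h
    rw [sub_eq_zero] at h
    subst h
    simp at hxy
    linarith
  obtain ⟨t, ht0, htf⟩ := aux_exit_ray hbd hy hu
  obtain ⟨t', ht'0, ht'f⟩ := aux_exit_ray hbd hx (neg_ne_zero.2 hu)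
  refine ⟨_, ht'f, _, htf, ?_⟩
  have hvec : (y + t • (y - x)) - (x + t' • -(y - x)) = (1 + t + t') • (y - x) := by
    module
  rw [dist_comm, dist_eq_norm, hvec, norm_smul, Real.norm_eq_abs,
    abs_of_nonneg (by linarith)]
  have h1 : dist x y ≤ ‖y - x‖ := by rw [dist_eq_norm, norm_sub_rev]
  nlinarith [norm_nonneg (y - x)]

/-- Joining along a segment. -/
lemma aux_joined_seg {U : Set E} {a : E} (w : E)
    (h : ∀ s : ℝ, 0 ≤ s → s ≤ 1 → a + s • w ∈ U) : JoinedIn U a (a + w) := by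
  refine ⟨⟨⟨fun s : unitInterval => a + (s : ℝ) • w, by continuity⟩, by simp, by simp⟩,
    fun s => h s s.2.1 s.2.2⟩

end AuxStmt5

set_option maxHeartbeats 2000000 in
theorem stmt_5 (E : Type u) [NormedAddCommGroup E] [NormedSpace ℝ E] [CompleteSpace E]
    (hdim : 2 ≤ Module.rank ℝ E) (D : Set E) (hD : IsRegion D)
    (hb : Bornology.IsBounded D) :
    ∀ z₁ ∈ frontier D, ∀ z₂ ∈ frontier D, ∃ z₃ ∈ frontier D,
      Metric.diam D / 6 ≤ min (dist z₃ z₁) (dist z₃ z₂) := by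
  obtain ⟨hDopen, hDconn⟩ := hD
  intro z₁ hz₁ z₂ hz₂
  by_contra hcon
  push_neg at hcon
  set d := Metric.diam D with hd
  have hE2 : (1 : Cardinal) < Module.rank ℝ E := lt_of_lt_of_le (by norm_num) hdim
  have hEnt : Nontrivial E := rank_pos_iff_nontrivial.1 (lt_of_lt_of_le (by norm_num) hdim)
  -- d > 0
  obtain ⟨x₀, hx₀⟩ := hDconn.nonempty
  obtain ⟨ρ, hρ, hballsub⟩ := Metric.isOpen_iff.1 hDopen x₀ hx₀
  obtain ⟨v, hv⟩ := exists_ne (0 : E)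
  have hvn : 0 < ‖v‖ := norm_pos_iff.2 hv
  have hdpos : 0 < d := by
    have hy : x₀ + (ρ / 2 / ‖v‖) • v ∈ D := by
      apply hballsub
      rw [mem_ball, dist_eq_norm]
      have h2 : x₀ + (ρ / 2 / ‖v‖) • v - x₀ = (ρ / 2 / ‖v‖) • v := by abel
      rw [h2, norm_smul, Real.norm_eq_abs, abs_of_nonneg (by positivity),
        div_mul_cancel₀ _ hvn.ne']
      linarith
    have hdd : dist x₀ (x₀ + (ρ / 2 / ‖v‖) • v) ≤ d :=
      Metric.dist_le_diam_of_mem hb hx₀ hy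
    rw [dist_eq_norm] at hdd
    have h2 : x₀ - (x₀ + (ρ / 2 / ‖v‖) • v) = -((ρ / 2 / ‖v‖) • v) := by abel
    rw [h2, norm_neg, norm_smul, Real.norm_eq_abs, abs_of_nonneg (by positivity),
      div_mul_cancel₀ _ hvn.ne'] at hdd
    linarith
  set r := d / 6 with hrdef
  have hr : 0 < r := by positivity
  have hfr : frontier D ⊆ ball z₁ r ∪ ball z₂ r := by
    intro z hz
    rcases min_lt_iff.1 (hcon z hz) with h | h
    · exact Or.inl (mem_ball.2 h)
    · exact Or.inr (mem_ball.2 h)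
  -- far frontier points give dist z₁ z₂ ≥ 5d/12
  obtain ⟨p, hp, q, hq, hpq⟩ := aux_far_frontier hb (c := 3 * d / 4)
    (by positivity) (by linarith)
  have hs512 : 5 * d / 12 ≤ dist z₁ z₂ := by
    have tri : dist p q ≤ dist p z₁ + dist z₁ z₂ + dist z₂ q := dist_triangle4 p z₁ z₂ q
    have tri2 : dist p q ≤ dist p z₂ + dist z₂ z₁ + dist z₁ q := dist_triangle4 p z₂ z₁ q
    have c1 : dist z₂ q = dist q z₂ := dist_comm _ _
    have c2 : dist z₁ q = dist q z₁ := dist_comm _ _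
    have c3 : dist z₂ z₁ = dist z₁ z₂ := dist_comm _ _
    have t1 : dist p q ≤ dist p z₁ + dist z₁ q := dist_triangle p z₁ q
    have t2 : dist p q ≤ dist p z₂ + dist z₂ q := dist_triangle p z₂ q
    rcases hfr hp with h1 | h1 <;> rcases hfr hq with h2 | h2 <;>
      rw [mem_ball] at h1 h2 <;> linarith
  have hszpos : 0 < dist z₁ z₂ := by linarith
  have hdisj : Disjoint (ball z₁ r) (ball z₂ r) := by
    rw [Set.disjoint_left]
    intro a h1 h2
    rw [mem_ball] at h1 h2
    have : dist z₁ z₂ ≤ dist z₁ a + dist a z₂ := dist_triangle z₁ a z₂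
    rw [dist_comm z₁ a] at this
    linarith
  by_cases hDsub : D ⊆ ball z₁ r ∪ ball z₂ r
  · have hdle : ∀ w : E, D ⊆ ball w r → False := by
      intro w hw
      have h1 : d ≤ Metric.diam (ball w r) := Metric.diam_mono hw isBounded_ball
      have h2 : Metric.diam (ball w r) ≤ 2 * r := Metric.diam_ball hr.le
      linarith
    rcases hDconn.isPreconnected.subset_or_subset isOpen_ball isOpen_ball hdisj hDsub with
      h | h
    · exact hdle z₁ h
    · exact hdle z₂ h
  · obtain ⟨x, hxD, hxU⟩ := Set.not_subset.1 hDsub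
    set U : Set E := (ball z₁ r ∪ ball z₂ r)ᶜ with hUdef
    have hxU' : x ∈ U := hxU
    have hxz₁ : r ≤ dist x z₁ := by
      have := fun h => hxU (Or.inl (mem_ball.2 h)); linarith [not_lt.1 this]
    have hxz₂ : r ≤ dist x z₂ := by
      have := fun h => hxU (Or.inr (mem_ball.2 h)); linarith [not_lt.1 this]
    -- anything joined to x inside U is in D
    have hUD : ∀ y : E, JoinedIn U x y → y ∈ D := by
      intro y hjoin
      obtain ⟨γ, hγ⟩ := hjoin
      have hC : IsPreconnected (Set.range fun s : unitInterval => γ s) := by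
        rw [← Set.image_univ]
        exact isPreconnected_univ.image _ γ.continuous.continuousOn
      have hsub : (Set.range fun s : unitInterval => γ s) ⊆ D ∪ (closure D)ᶜ := by
        rintro _ ⟨s, rfl⟩
        by_cases hcl : γ s ∈ closure D
        · left
          by_contra hnot
          have hfrmem : γ s ∈ frontier D := by
            rw [hDopen.frontier_eq]; exact ⟨hcl, hnot⟩
          exact hγ s (hfr hfrmem)
        · exact Or.inr hcl
      have hdisj2 : Disjoint D (closure D)ᶜ :=
        Set.disjoint_left.2 fun a ha h2 => h2 (subset_closure ha)
      rcases hC.subset_or_subset hDopen isClosed_closure.isOpen_compl hdisj2 hsub with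
        h | h
      · have : γ 1 ∈ D := h ⟨1, rfl⟩
        rwa [γ.target] at this
      · have : γ 0 ∈ (closure D)ᶜ := h ⟨0, rfl⟩
        rw [γ.source] at this
        exact absurd (subset_closure hxD) this
    -- the first ray, away from z₁
    set u₁ := x - z₁ with hu₁def
    have hu₁norm : r ≤ ‖u₁‖ := by rw [hu₁def, ← dist_eq_norm]; exact hxz₁
    have hu₁pos : 0 < ‖u₁‖ := lt_of_lt_of_le hr hu₁norm
    have hray1 : ∀ t : ℝ, 0 ≤ t → x + t • u₁ ∉ ball z₁ r := by
      intro t ht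
      rw [mem_ball, dist_eq_norm, not_lt]
      have hvec : x + t • u₁ - z₁ = (1 + t) • u₁ := by rw [hu₁def]; module
      rw [hvec, norm_smul, Real.norm_eq_abs, abs_of_nonneg (by linarith)]
      nlinarith
    set T : Set ℝ := {t : ℝ | 0 ≤ t ∧ x + t • u₁ ∈ closedBall z₂ r} with hTdef
    -- distance bound for final contradiction
    have hxz₂d : dist x z₂ ≤ d := by
      have h1 : dist x z₂ ≤ Metric.diam (closure D) :=
        Metric.dist_le_diam_of_mem hb.closure (subset_closure hxD)
          (frontier_subset_closure hz₂)
      rwa [Metric.diam_closure] at h1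
    by_cases hT : T.Nonempty
    · -- ray hits the second ball: go around it on the sphere, then escape
      have hTclosed : IsClosed T := by
        have : T = Set.Ici (0:ℝ) ∩ (fun t : ℝ => x + t • u₁) ⁻¹' closedBall z₂ r := rfl
        rw [this]
        exact isClosed_Ici.inter (IsClosed.preimage (continuous_const.add (continuous_id.smul continuous_const)) Metric.isClosed_closedBall)
      have hTbdd : BddBelow T := ⟨0, fun s hs => hs.1⟩
      set t₁ := sInf T with ht₁def
      have ht₁T : t₁ ∈ T := hTclosed.csInf_mem hT hTbdd
      have ht₁0 : 0 ≤ t₁ := ht₁T.1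
      set p₁ := x + t₁ • u₁ with hp₁def
      have hp₁le : dist p₁ z₂ ≤ r := mem_closedBall.1 ht₁T.2
      have hp₁sphere : dist p₁ z₂ = r := by
        refine le_antisymm hp₁le ?_
        by_contra hlt
        push_neg at hlt
        rcases eq_or_lt_of_le ht₁0 with h0 | hpos
        · have : p₁ = x := by rw [hp₁def, ← h0]; simp
          rw [this] at hlt
          linarith
        · have hg : Continuous fun t : ℝ => dist (x + t • u₁) z₂ :=
            (continuous_const.add (continuous_id.smul continuous_const)).dist continuous_const
          obtain ⟨δ, hδ, hsubδ⟩ := Metric.isOpen_iff.1 (isOpen_Iio.preimage hg) t₁ hlt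
          set t' := max 0 (t₁ - δ / 2) with ht'def
          have ht'mem : t' ∈ ball t₁ δ := by
            rw [mem_ball, Real.dist_eq, abs_lt]
            constructor
            · have h1 : t₁ - δ / 2 ≤ t' := le_max_right _ _
              linarith
            · have h1 : t' ≤ t₁ := max_le ht₁0 (by linarith)
              linarith
          have ht'T : t' ∈ T := by
            refine ⟨le_max_left _ _, mem_closedBall.2 (le_of_lt (hsubδ ht'mem))⟩
          have h1 : t₁ ≤ t' := csInf_le hTbdd ht'T
          have h2 : t' < t₁ := max_lt hpos (by linarith)
          linarith
      -- the segment from x to p₁ stays in U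
      have hseg1mem : ∀ s : ℝ, 0 ≤ s → s ≤ 1 → x + s • (t₁ • u₁) ∈ U := by
          intro s hs0 hs1
          rw [smul_smul]
          intro hmem
          rcases hmem with hmem | hmem
          · exact hray1 (s * t₁) (by positivity) hmem
          · have hsT : s * t₁ ∈ T :=
              ⟨by positivity, ball_subset_closedBall hmem⟩
            have h1 : t₁ ≤ s * t₁ := csInf_le hTbdd hsT
            have h2 : s * t₁ ≤ t₁ := by nlinarith
            have h3 : s * t₁ = t₁ := le_antisymm h2 h1
            rw [h3] at hmem
            rw [mem_ball] at hmem
            rw [← hp₁def] at hmem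
            linarith [hp₁sphere]
      have hseg1 : JoinedIn U x p₁ := by
        rw [hp₁def]; exact aux_joined_seg _ hseg1mem
      -- the sphere around z₂ is inside U
      have hspU : sphere z₂ r ⊆ U := by
        intro a ha
        rw [mem_sphere] at ha
        intro hmem
        rcases hmem with hmem | hmem
        · rw [mem_ball] at hmem
          have : dist z₁ z₂ ≤ dist z₁ a + dist a z₂ := dist_triangle z₁ a z₂
          rw [dist_comm z₁ a] at this
          linarith
        · rw [mem_ball] at hmem
          linarith
      set w₂ := z₂ - z₁ with hw₂def
      have hw₂norm : ‖w₂‖ = dist z₁ z₂ := by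
        rw [hw₂def, ← dist_eq_norm, dist_comm]
      set p₂ := z₂ + (r / dist z₁ z₂) • w₂ with hp₂def
      have hp₂sphere : p₂ ∈ sphere z₂ r := by
        rw [mem_sphere, dist_eq_norm, hp₂def]
        have hvec : z₂ + (r / dist z₁ z₂) • w₂ - z₂ = (r / dist z₁ z₂) • w₂ := by abel
        rw [hvec, norm_smul, Real.norm_eq_abs, abs_of_nonneg (by positivity), hw₂norm,
          div_mul_cancel₀ _ hszpos.ne']
      have hjoin2 : JoinedIn U p₁ p₂ :=
        ((isPathConnected_sphere hE2 z₂ hr.le).joinedIn p₁ (by rwa [mem_sphere]) p₂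
          hp₂sphere).mono hspU
      -- the second ray, away from everything
      have hray2 : ∀ t : ℝ, 0 ≤ t → p₂ + t • w₂ ∈ U := by
        intro t ht
        intro hmem
        rcases hmem with hmem | hmem
        · rw [mem_ball, dist_eq_norm] at hmem
          have hvec : p₂ + t • w₂ - z₁ = (1 + r / dist z₁ z₂ + t) • w₂ := by
            rw [hp₂def, hw₂def]; module
          rw [hvec, norm_smul, Real.norm_eq_abs,
            abs_of_nonneg (by positivity), hw₂norm] at hmem
          have hexp : (1 + r / dist z₁ z₂ + t) * dist z₁ z₂
              = dist z₁ z₂ + r + t * dist z₁ z₂ := by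
            rw [add_mul, add_mul, one_mul, div_mul_cancel₀ _ hszpos.ne']
          rw [hexp] at hmem
          nlinarith [mul_nonneg ht hszpos.le]
        · rw [mem_ball, dist_eq_norm] at hmem
          have hvec : p₂ + t • w₂ - z₂ = (r / dist z₁ z₂ + t) • w₂ := by
            rw [hp₂def]; module
          rw [hvec, norm_smul, Real.norm_eq_abs,
            abs_of_nonneg (by positivity), hw₂norm] at hmem
          have hexp : (r / dist z₁ z₂ + t) * dist z₁ z₂ = r + t * dist z₁ z₂ := by
            rw [add_mul, div_mul_cancel₀ _ hszpos.ne']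
          rw [hexp] at hmem
          nlinarith [mul_nonneg ht hszpos.le]
      set T₁ := (2 * d + 1) / dist z₁ z₂ with hT₁def
      set qq := p₂ + T₁ • w₂ with hqqdef
      have hjoin3 : JoinedIn U p₂ qq := by
        rw [hqqdef]
        refine aux_joined_seg _ fun s hs0 hs1 => ?_
        rw [smul_smul]
        exact hray2 (s * T₁) (mul_nonneg hs0 (div_nonneg (by linarith) dist_nonneg))
      have hjoin : JoinedIn U x qq := (hseg1.trans hjoin2).trans hjoin3
      have hqqD : qq ∈ D := hUD qq hjoin
      have hqqfar : d < dist x qq := by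
        have hvec : qq - z₂ = (r / dist z₁ z₂ + T₁) • w₂ := by
          rw [hqqdef, hp₂def]; module
        have hdistqz : dist qq z₂ = (r / dist z₁ z₂ + T₁) * dist z₁ z₂ := by
          rw [dist_eq_norm, hvec, norm_smul, Real.norm_eq_abs,
            abs_of_nonneg (by positivity), hw₂norm]
        have hexp : (r / dist z₁ z₂ + T₁) * dist z₁ z₂ = r + (2 * d + 1) := by
          rw [hT₁def]
          field_simp
        have h1 : dist qq z₂ ≤ dist qq x + dist x z₂ := dist_triangle qq x z₂
        rw [dist_comm x qq]
        rw [hdistqz, hexp] at h1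
        linarith
      have : dist x qq ≤ d := Metric.dist_le_diam_of_mem hb hxD hqqD
      linarith
    · -- the ray never meets the second ball: escape directly
      have hrayU : ∀ t : ℝ, 0 ≤ t → x + t • u₁ ∈ U := by
        intro t ht
        intro hmem
        rcases hmem with hmem | hmem
        · exact hray1 t ht hmem
        · exact hT ⟨t, ht, ball_subset_closedBall hmem⟩
      set T₀ := (2 * d + 1) / ‖u₁‖ with hT₀def
      set qq := x + T₀ • u₁ with hqqdef
      have hjoin : JoinedIn U x qq := by
        rw [hqqdef]
        refine aux_joined_seg _ fun s hs0 hs1 => ?_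
        rw [smul_smul]
        exact hrayU (s * T₀) (mul_nonneg hs0 (div_nonneg (by linarith) (norm_nonneg _)))
      have hqqD : qq ∈ D := hUD qq hjoin
      have hqqfar : d < dist x qq := by
        rw [dist_eq_norm, hqqdef]
        have hvec : x - (x + T₀ • u₁) = -(T₀ • u₁) := by abel
        rw [hvec, norm_neg, norm_smul, Real.norm_eq_abs,
          abs_of_nonneg (by positivity), hT₀def, div_mul_cancel₀ _ hu₁pos.ne']
        linarith
      have : dist x qq ≤ d := Metric.dist_le_diam_of_mem hb hxD hqqD
      linarith
end
end

section
/- Let E, T, H be real Banach spaces of dimension at least 2, let D ⊊ E, G ⊊ T, Ω ⊊ H be proper domains, and let M, L ≥ 1 and ϑ ∈ (0,1). If f : D → G is an M-QH homeomorphism and g : G → Ω is an (L,ϑ)-locally bilipschitz homeomorphism, then g ∘ f : D → Ω is (L',ϑ')-locally bilipschitz with L' and ϑ' depending only on M, L and ϑ. -/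
open Set Metric Topology

noncomputable section

universe u v w

/-!
On a ball `B(x, r d_D(x))` with `M r ≤ 1/24`, the quasihyperbolic distance of `D` is comparable
to `|y - z| / d_D(x)`: the segment gives `k_D(a, b) ≤ |a - b| / (d_D(a) - |a - b|)`, and
comparing the density `1 / d_D(γ t)` with `1 / (d_D(a) + arclength)` gives
`k_D(a, b) ≥ log (1 + |a - b| / d_D(a))`. The same two bounds in `G`, together with
`M⁻¹ k_D ≤ k_G ∘ f ≤ M k_D`, show that `f` maps this ball into `B(f x, 4 M r d_G(f x))` and is
bilipschitz there with constant `8 M` and scale `d_G(f x) / d_D(x)`. For `r = ϑ / (24 M)` the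
image lies in the ball where `g` is bilipschitz with scale `c`, so `g ∘ f` is bilipschitz with
constant `8 M L` and scale `c d_G(f x) / d_D(x)`.
-/

section BoundaryDistance

variable {E : Type*} [NormedAddCommGroup E] {D : Set E} {x : E}

theorem bdist_nonneg (D : Set E) (x : E) : 0 ≤ bdist D x := infDist_nonneg

theorem bdist_le_bdist_add_dist (D : Set E) (x y : E) : bdist D x ≤ bdist D y + dist x y :=
  infDist_le_infDist_add_dist

variable [NormedSpace ℝ E]

theorem bdist_pos (hD : IsOpen D) (hD' : D ≠ univ) (hx : x ∈ D) : 0 < bdist D x := by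
  have hfr : (frontier D).Nonempty := nonempty_frontier_iff.2 ⟨⟨x, hx⟩, hD'⟩
  refine (isClosed_frontier.notMem_iff_infDist_pos hfr).1 fun h => ?_
  exact (hD.frontier_eq ▸ h).2 hx

theorem ball_bdist_subset (hD : IsOpen D) (hx : x ∈ D) : ball x (bdist D x) ⊆ D := by
  rcases (bdist_nonneg D x).eq_or_lt with h | h
  · simp [← h]
  refine (convex_ball x _).isPreconnected.subset_of_closure_inter_subset hD
    ⟨x, mem_ball_self h, hx⟩ ?_
  rintro p ⟨hpD, hpx⟩
  by_contra hp
  have hfr : p ∈ frontier D := ⟨hpD, by rwa [hD.interior_eq]⟩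
  exact (mem_ball'.1 hpx).not_ge (infDist_le_dist_of_mem hfr)

theorem closedBall_bdist_subset (hD : IsOpen D) (hD' : D ≠ univ) (hx : x ∈ D) {r : ℝ}
    (hr : r < 1) : closedBall x (r * bdist D x) ⊆ D :=
  (closedBall_subset_ball (mul_lt_of_lt_one_left (bdist_pos hD hD' hx) hr)).trans
    (ball_bdist_subset hD hx)

end BoundaryDistance

section QuasihyperbolicDistance

variable {E : Type*} [NormedAddCommGroup E] [NormedSpace ℝ E] {D : Set E} {a b : E}

def qhLengths (D : Set E) (a b : E) : Set ℝ :=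
  { l | ∃ γ : ℝ → E, ContDiff ℝ 1 γ ∧ γ 0 = a ∧ γ 1 = b ∧
    (∀ t ∈ Icc (0:ℝ) 1, γ t ∈ D) ∧ l = qhLength D γ }

theorem qhDist_eq_sInf (D : Set E) (a b : E) : qhDist D a b = sInf (qhLengths D a b) := rfl

theorem qhLength_nonneg (D : Set E) (γ : ℝ → E) : 0 ≤ qhLength D γ :=
  intervalIntegral.integral_nonneg zero_le_one fun _ _ =>
    div_nonneg (norm_nonneg _) (bdist_nonneg D _)

theorem qhLengths_bddBelow (D : Set E) (a b : E) : BddBelow (qhLengths D a b) :=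
  ⟨0, by rintro _ ⟨γ, -, -, -, -, rfl⟩; exact qhLength_nonneg D γ⟩

theorem qhDist_nonneg (D : Set E) (a b : E) : 0 ≤ qhDist D a b :=
  Real.sInf_nonneg (by rintro _ ⟨γ, -, -, -, -, rfl⟩; exact qhLength_nonneg D γ)

theorem qhLengths_nonempty_of_qhDist_pos (h : 0 < qhDist D a b) :
    (qhLengths D a b).Nonempty :=
  nonempty_iff_ne_empty.2 fun he => by simp [qhDist_eq_sInf, he] at h

/-- The segment from `a` to `b` is an admissible curve. -/
theorem exists_mem_qhLengths_le (hD : IsOpen D) (ha : a ∈ D) (hab : dist a b < bdist D a) :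
    ∃ l ∈ qhLengths D a b, l ≤ dist a b / (bdist D a - dist a b) := by
  set γ : ℝ → E := fun t => a + t • (b - a)
  have hγ' : ∀ t, deriv γ t = b - a := fun t => by
    simpa [γ] using (((hasDerivAt_id t).smul_const (b - a)).const_add a).deriv
  have hdist : ∀ t ∈ Icc (0:ℝ) 1, dist a (γ t) ≤ dist a b := fun t ht => by
    rw [dist_eq_norm, dist_eq_norm, norm_sub_rev a b]
    simpa [γ, norm_smul, abs_of_nonneg ht.1] using
      mul_le_of_le_one_left (norm_nonneg (b - a)) ht.2
  have hbd : ∀ t ∈ Icc (0:ℝ) 1, bdist D a - dist a b ≤ bdist D (γ t) := fun t ht => by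
    linarith [bdist_le_bdist_add_dist D a (γ t), hdist t ht]
  refine ⟨qhLength D γ, ⟨γ, ?_, by simp [γ], by simp [γ], fun t ht => ?_, rfl⟩, ?_⟩
  · exact contDiff_const.add (contDiff_id.smul contDiff_const)
  · exact ball_bdist_subset hD ha (mem_ball'.2 ((hdist t ht).trans_lt hab))
  · have hbound : ∀ t ∈ uIoc (0:ℝ) 1,
        ‖‖deriv γ t‖ / bdist D (γ t)‖ ≤ dist a b / (bdist D a - dist a b) := fun t ht => by
      rw [uIoc_of_le zero_le_one] at ht
      rw [Real.norm_of_nonneg (div_nonneg (norm_nonneg _) (bdist_nonneg D _)), hγ',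
        ← dist_eq_norm']
      exact div_le_div_of_nonneg_left dist_nonneg (by linarith) (hbd t (Ioc_subset_Icc_self ht))
    simpa [qhLength] using
      (le_abs_self _).trans (intervalIntegral.norm_integral_le_of_norm_le_const hbound)

theorem qhLengths_nonempty_of_dist_lt (hD : IsOpen D) (ha : a ∈ D)
    (hab : dist a b < bdist D a) : (qhLengths D a b).Nonempty :=
  let ⟨l, hl, _⟩ := exists_mem_qhLengths_le hD ha hab
  ⟨l, hl⟩

theorem qhDist_le_of_dist_lt (hD : IsOpen D) (ha : a ∈ D) (hab : dist a b < bdist D a) :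
    qhDist D a b ≤ dist a b / (bdist D a - dist a b) :=
  let ⟨_, hl, hle⟩ := exists_mem_qhLengths_le hD ha hab
  (csInf_le (qhLengths_bddBelow D a b) hl).trans hle

theorem dist_le_integral_norm_deriv {γ : ℝ → E} (hγ : ContDiff ℝ 1 γ) {t : ℝ} (ht : 0 ≤ t) :
    dist (γ 0) (γ t) ≤ ∫ u in (0:ℝ)..t, ‖deriv γ u‖ := by
  have hs : ∀ u, HasDerivAt (fun v => ∫ w in (0:ℝ)..v, ‖deriv γ w‖) ‖deriv γ u‖ u := fun u =>
    ((hγ.continuous_deriv le_rfl).norm.integral_hasStrictDerivAt 0 u).hasDerivAt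
  rw [dist_comm, dist_eq_norm]
  refine image_norm_le_of_norm_deriv_right_le_deriv_boundary (f := fun u => γ u - γ 0)
    (hγ.continuous.sub continuous_const).continuousOn
    (fun u _ => ((hγ.differentiable one_ne_zero u).hasDerivAt.sub_const (γ 0)).hasDerivWithinAt)
    ?_ hs (fun u _ => le_rfl) ⟨ht, le_rfl⟩
  simp

theorem log_one_add_le_qhLength (hD : IsOpen D) (hD' : D ≠ univ) {γ : ℝ → E}
    (hγ : ContDiff ℝ 1 γ) (hγD : ∀ t ∈ Icc (0:ℝ) 1, γ t ∈ D) :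
    Real.log (1 + dist (γ 0) (γ 1) / bdist D (γ 0)) ≤ qhLength D γ := by
  set d := bdist D (γ 0)
  set s : ℝ → ℝ := fun t => ∫ u in (0:ℝ)..t, ‖deriv γ u‖
  have hs : ∀ t, HasDerivAt s ‖deriv γ t‖ t := fun t =>
    ((hγ.continuous_deriv le_rfl).norm.integral_hasStrictDerivAt 0 t).hasDerivAt
  have hd : 0 < d := bdist_pos hD hD' (hγD 0 ⟨le_rfl, zero_le_one⟩)
  have hchord : ∀ t ∈ Icc (0:ℝ) 1, dist (γ 0) (γ t) ≤ s t := fun t ht =>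
    dist_le_integral_norm_deriv hγ ht.1
  have hpos : ∀ t ∈ Icc (0:ℝ) 1, 0 < d + s t := fun t ht => by
    linarith [hchord t ht, dist_nonneg (x := γ 0) (y := γ t)]
  have hdensity :
      MeasureTheory.IntegrableOn (fun t => ‖deriv γ t‖ / bdist D (γ t)) (Icc 0 1) :=
    ((hγ.continuous_deriv le_rfl).norm.continuousOn.div
      ((continuous_infDist_pt _).comp hγ.continuous).continuousOn
      fun t ht => (bdist_pos hD hD' (hγD t ht)).ne').integrableOn_Icc
  calc Real.log (1 + dist (γ 0) (γ 1) / d)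
      = Real.log (d + dist (γ 0) (γ 1)) - Real.log d := by
        rw [← Real.log_div (by positivity) hd.ne']
        congr 1
        field_simp
    _ ≤ Real.log (d + s 1) - Real.log (d + s 0) := by
        have hs0 : s 0 = 0 := intervalIntegral.integral_same
        rw [hs0, add_zero]
        gcongr
        exact hchord 1 ⟨zero_le_one, le_rfl⟩
    -- `log (d + s)` has derivative `‖γ'‖ / (d + s)`, and `d_D(γ t) ≤ d + s t`
    _ ≤ qhLength D γ := by
        refine intervalIntegral.sub_le_integral_of_hasDeriv_right_of_le zero_le_one
          (fun t ht => ((hs t).const_add d).continuousAt.continuousWithinAt.log (hpos t ht).ne')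
          (fun t ht =>
            (((hs t).const_add d).log (hpos t (Ioo_subset_Icc_self ht)).ne').hasDerivWithinAt)
          hdensity fun t ht => ?_
        have ht := Ioo_subset_Icc_self ht
        refine div_le_div_of_nonneg_left (norm_nonneg _) (bdist_pos hD hD' (hγD t ht)) ?_
        linarith [bdist_le_bdist_add_dist D (γ t) (γ 0), hchord t ht, dist_comm (γ 0) (γ t)]

theorem log_one_add_le_qhDist (hD : IsOpen D) (hD' : D ≠ univ)
    (hne : (qhLengths D a b).Nonempty) : Real.log (1 + dist a b / bdist D a) ≤ qhDist D a b := by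
  refine le_csInf hne ?_
  rintro _ ⟨γ, hγ, rfl, rfl, hγD, rfl⟩
  exact log_one_add_le_qhLength hD hD' hγ hγD

theorem dist_div_add_le_qhDist (hD : IsOpen D) (hD' : D ≠ univ) (ha : a ∈ D)
    (hne : (qhLengths D a b).Nonempty) : dist a b / (bdist D a + dist a b) ≤ qhDist D a b := by
  have hd := bdist_pos hD hD' ha
  calc dist a b / (bdist D a + dist a b) = 1 - (1 + dist a b / bdist D a)⁻¹ := by
        field_simp
        ring
    _ ≤ Real.log (1 + dist a b / bdist D a) := Real.one_sub_inv_le_log_of_pos (by positivity)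
    _ ≤ qhDist D a b := log_one_add_le_qhDist hD hD' hne

theorem dist_le_two_mul_qhDist_mul_bdist (hD : IsOpen D) (hD' : D ≠ univ) (ha : a ∈ D)
    (hne : (qhLengths D a b).Nonempty) (h : qhDist D a b ≤ 1 / 2) :
    dist a b ≤ 2 * qhDist D a b * bdist D a := by
  have hd := bdist_pos hD hD' ha
  have hlow := dist_div_add_le_qhDist hD hD' ha hne
  rw [div_le_iff₀ (by positivity)] at hlow
  nlinarith [dist_nonneg (x := a) (y := b)]

end QuasihyperbolicDistance

section QuasihyperbolicMaps

variable {E T : Type*} [NormedAddCommGroup E] [NormedSpace ℝ E] [NormedAddCommGroup T]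
  [NormedSpace ℝ T] {D : Set E} {G : Set T} {f : E → T} {M r : ℝ} {a b x y z : E}

theorem IsQHMap.dist_le (hf : IsQHMap M D G f) (hM : 0 < M) (hD : IsOpen D) (hD' : D ≠ univ)
    (hG : IsOpen G) (hG' : G ≠ univ) (ha : a ∈ D) (hb : b ∈ D) (hfa : f a ∈ G)
    (hab : dist a b < bdist D a) (hK : M * qhDist D a b ≤ 1 / 2) :
    dist (f a) (f b) ≤ 2 * (M * qhDist D a b) * bdist G (f a) := by
  have hKG : 0 ≤ 2 * (M * qhDist D a b) := by have := qhDist_nonneg D a b; positivity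
  rcases eq_or_ne a b with rfl | hne
  · simpa using mul_nonneg hKG (bdist_nonneg G (f a))
  -- `qhDist G` is `0` when no admissible curve exists; positivity of `qhDist D a b` rules this out.
  have hqD : 0 < qhDist D a b :=
    (div_pos (dist_pos.2 hne) (by linarith [dist_nonneg (x := a) (y := b)])).trans_le
      (dist_div_add_le_qhDist hD hD' ha (qhLengths_nonempty_of_dist_lt hD ha hab))
  obtain ⟨hlow, hup⟩ := hf a ha b hb
  have hqG : 0 < qhDist G (f a) (f b) := (div_pos hqD hM).trans_le hlow
  calc dist (f a) (f b) ≤ 2 * qhDist G (f a) (f b) * bdist G (f a) :=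
        dist_le_two_mul_qhDist_mul_bdist hG hG' hfa (qhLengths_nonempty_of_qhDist_pos hqG)
          (hup.trans hK)
    _ ≤ 2 * (M * qhDist D a b) * bdist G (f a) := by
        have := bdist_nonneg G (f a)
        gcongr

theorem IsQHMap.dist_le_of_mem_closedBall (hf : IsQHMap M D G f) (hfDG : MapsTo f D G)
    (hD : IsOpen D) (hD' : D ≠ univ) (hG : IsOpen G) (hG' : G ≠ univ) (hM : 1 ≤ M)
    (hMr : M * r ≤ 1 / 24) (hx : x ∈ D) (hy : y ∈ closedBall x (r * bdist D x)) :
    dist (f x) (f y) ≤ 4 * (M * r) * bdist G (f x) := by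
  have hd := bdist_pos hD hD' hx
  have hr : r ≤ 1 / 24 := by rcases le_or_gt r 0 with h | h <;> nlinarith
  have hxy : dist x y ≤ r * bdist D x := by rw [dist_comm]; exact hy
  have hxy' : dist x y < bdist D x := by nlinarith
  have hqD : qhDist D x y ≤ 2 * r :=
    calc qhDist D x y ≤ dist x y / (bdist D x - dist x y) := qhDist_le_of_dist_lt hD hx hxy'
      _ ≤ r * bdist D x / (bdist D x / 2) := by
          gcongr
          · linarith [dist_nonneg (x := x) (y := y)]
          · nlinarith
      _ = 2 * r := by field_simp
  have hyD := closedBall_bdist_subset hD hD' hx (by linarith) hy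
  calc dist (f x) (f y) ≤ 2 * (M * qhDist D x y) * bdist G (f x) :=
        hf.dist_le (by linarith) hD hD' hG hG' hx hyD (hfDG hx) hxy' (by nlinarith)
    _ ≤ 4 * (M * r) * bdist G (f x) :=
        mul_le_mul_of_nonneg_right (by nlinarith) (bdist_nonneg G (f x))

theorem IsQHMap.dist_image_mul_le (hf : IsQHMap M D G f) (hfDG : MapsTo f D G)
    (hD : IsOpen D) (hD' : D ≠ univ) (hG : IsOpen G) (hG' : G ≠ univ) (hM : 1 ≤ M)
    (hMr : M * r ≤ 1 / 24) (hx : x ∈ D) (hy : y ∈ closedBall x (r * bdist D x))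
    (hz : z ∈ closedBall x (r * bdist D x)) :
    dist (f y) (f z) * bdist D x ≤ 8 * M * bdist G (f x) * dist y z := by
  have hd := bdist_pos hD hD' hx
  have hrd : r * bdist D x ≤ bdist D x / 24 := by rcases le_or_gt r 0 with h | h <;> nlinarith
  have hxy : dist x y ≤ r * bdist D x := by rw [dist_comm]; exact hy
  have hyz : dist y z ≤ 2 * (r * bdist D x) := by
    linarith [dist_triangle_left y z x, mem_closedBall'.1 hz]
  have hyD := closedBall_bdist_subset hD hD' hx (by nlinarith) hy
  have hzD := closedBall_bdist_subset hD hD' hx (by nlinarith) hz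
  have hdy : bdist D x / 2 ≤ bdist D y - dist y z := by
    linarith [bdist_le_bdist_add_dist D x y]
  have hqD : qhDist D y z * bdist D x ≤ 2 * dist y z := by
    have := qhDist_le_of_dist_lt hD hyD (by linarith)
    rw [← le_div_iff₀ hd]
    calc qhDist D y z ≤ dist y z / (bdist D y - dist y z) := this
      _ ≤ dist y z / (bdist D x / 2) := by gcongr
      _ = 2 * dist y z / bdist D x := by field_simp
  have hfy : bdist G (f y) ≤ 2 * bdist G (f x) := by
    have := hf.dist_le_of_mem_closedBall hfDG hD hD' hG hG' hM hMr hx hy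
    have : M * r * bdist G (f x) ≤ bdist G (f x) / 24 := by nlinarith [bdist_nonneg G (f x)]
    linarith [bdist_le_bdist_add_dist G (f y) (f x), dist_comm (f x) (f y),
      bdist_nonneg G (f x)]
  have hK : M * qhDist D y z ≤ 1 / 2 := by
    have hq : qhDist D y z ≤ 4 * r := by
      rw [← mul_le_mul_iff_left₀ hd]; nlinarith [dist_nonneg (x := y) (y := z)]
    nlinarith
  have hfyz := hf.dist_le (by linarith) hD hD' hG hG' hyD hzD (hfDG hyD) (by linarith) hK
  have := bdist_nonneg G (f y)
  have := qhDist_nonneg D y z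
  calc dist (f y) (f z) * bdist D x ≤ 2 * (M * qhDist D y z) * bdist G (f y) * bdist D x := by
        gcongr
    _ = 2 * M * bdist G (f y) * (qhDist D y z * bdist D x) := by ring
    _ ≤ 2 * M * (2 * bdist G (f x)) * (2 * dist y z) := by
        gcongr
        exact mul_nonneg (by linarith) (by linarith [bdist_nonneg G (f x)])
    _ = 8 * M * bdist G (f x) * dist y z := by ring

theorem IsQHMap.dist_mul_le (hf : IsQHMap M D G f) (hfDG : MapsTo f D G)
    (hD : IsOpen D) (hD' : D ≠ univ) (hG : IsOpen G) (hG' : G ≠ univ) (hM : 1 ≤ M)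
    (hMr : M * r ≤ 1 / 24) (hx : x ∈ D) (hy : y ∈ closedBall x (r * bdist D x))
    (hz : z ∈ closedBall x (r * bdist D x)) :
    dist y z * bdist G (f x) ≤ 4 * M * bdist D x * dist (f y) (f z) := by
  have hd := bdist_pos hD hD' hx
  have hd' := bdist_pos hG hG' (hfDG hx)
  have hrd : r * bdist D x ≤ bdist D x / 24 := by rcases le_or_gt r 0 with h | h <;> nlinarith
  have hxy : dist x y ≤ r * bdist D x := by rw [dist_comm]; exact hy
  have hyz : dist y z ≤ 2 * (r * bdist D x) := by
    linarith [dist_triangle_left y z x, mem_closedBall'.1 hz]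
  have hyD := closedBall_bdist_subset hD hD' hx (by nlinarith) hy
  have hzD := closedBall_bdist_subset hD hD' hx (by nlinarith) hz
  have hqD : dist y z / (2 * bdist D x) ≤ qhDist D y z := by
    have hyz' : dist y z < bdist D y := by linarith [bdist_le_bdist_add_dist D x y]
    refine le_trans ?_
      (dist_div_add_le_qhDist hD hD' hyD (qhLengths_nonempty_of_dist_lt hD hyD hyz'))
    gcongr
    · linarith [dist_nonneg (x := y) (y := z)]
    · linarith [bdist_le_bdist_add_dist D y x, dist_comm x y]
  have hfy := hf.dist_le_of_mem_closedBall hfDG hD hD' hG hG' hM hMr hx hy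
  have hfz := hf.dist_le_of_mem_closedBall hfDG hD hD' hG hG' hM hMr hx hz
  have hMrd : M * r * bdist G (f x) ≤ bdist G (f x) / 24 := by nlinarith
  have hdfy : bdist G (f x) / 2 ≤ bdist G (f y) - dist (f y) (f z) := by
    linarith [bdist_le_bdist_add_dist G (f x) (f y), dist_triangle_left (f y) (f z) (f x)]
  have hqG : qhDist G (f y) (f z) ≤ 2 * dist (f y) (f z) / bdist G (f x) :=
    calc qhDist G (f y) (f z) ≤ dist (f y) (f z) / (bdist G (f y) - dist (f y) (f z)) :=
          qhDist_le_of_dist_lt hG (hfDG hyD) (by linarith)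
      _ ≤ dist (f y) (f z) / (bdist G (f x) / 2) := by gcongr
      _ = 2 * dist (f y) (f z) / bdist G (f x) := by field_simp
  have hQH : qhDist D y z ≤ M * qhDist G (f y) (f z) := by
    have := (hf y hyD z hzD).1
    rwa [div_le_iff₀ (by linarith), mul_comm] at this
  have hchain : dist y z / (2 * bdist D x) ≤ M * (2 * dist (f y) (f z) / bdist G (f x)) :=
    hqD.trans (hQH.trans (by gcongr))
  rw [div_le_iff₀ (by positivity)] at hchain
  calc dist y z * bdist G (f x)
      ≤ M * (2 * dist (f y) (f z) / bdist G (f x)) * (2 * bdist D x) * bdist G (f x) := by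
        gcongr
    _ = 4 * M * bdist D x * dist (f y) (f z) := by field_simp; ring

end QuasihyperbolicMaps

theorem stmt_10 :
    ∀ (M L ϑ : ℝ), 1 ≤ M → 1 ≤ L → ϑ ∈ Set.Ioo (0:ℝ) 1 →
    ∃ L' ϑ' : ℝ, 1 ≤ L' ∧ ϑ' ∈ Set.Ioo (0:ℝ) 1 ∧
      ∀ (E : Type u) (T : Type v) (H : Type w)
        [NormedAddCommGroup E] [NormedSpace ℝ E] [CompleteSpace E]
        [NormedAddCommGroup T] [NormedSpace ℝ T] [CompleteSpace T]
        [NormedAddCommGroup H] [NormedSpace ℝ H] [CompleteSpace H],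
        2 ≤ Module.rank ℝ E → 2 ≤ Module.rank ℝ T → 2 ≤ Module.rank ℝ H →
      ∀ (D : Set E) (G : Set T) (Ω : Set H) (f : E → T) (g : T → H),
        IsProperDomain D → IsProperDomain G → IsProperDomain Ω →
        HomeoOn f D G → HomeoOn g G Ω →
        IsQHMap M D G f → LocBilip L ϑ G g →
        LocBilip L' ϑ' D (g ∘ f) := by
  intro M L ϑ hM hL hϑ
  refine ⟨8 * M * L, ϑ / (24 * M), by nlinarith,
    ⟨div_pos hϑ.1 (by linarith), (div_lt_one (by linarith)).2 (by linarith [hϑ.2])⟩, ?_⟩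
  intro E T H _ _ _ _ _ _ _ _ _ _ _ _ D G Ω f g hD hG _ hf _ hqh hg x hx
  have hMr : M * (ϑ / (24 * M)) = ϑ / 24 := by field_simp
  have hfDG := hf.1.mapsTo
  have hd := bdist_pos hD.1.1 hD.2 hx
  have hd' := bdist_pos hG.1.1 hG.2 (hfDG hx)
  obtain ⟨c, hc, hgc⟩ := hg (f x) (hfDG hx)
  refine ⟨c * bdist G (f x) / bdist D x, div_pos (mul_pos hc hd') hd, fun y hy z hz => ?_⟩
  have hmaps_ball :
      ∀ w ∈ ball x (ϑ / (24 * M) * bdist D x), f w ∈ ball (f x) (ϑ * bdist G (f x)) :=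
    fun w hw => mem_ball'.2 <| by
      have := hqh.dist_le_of_mem_closedBall hfDG hD.1.1 hD.2 hG.1.1 hG.2 hM (by linarith [hϑ.2])
        hx (ball_subset_closedBall hw)
      nlinarith [hϑ.1]
  obtain ⟨hglow, hgup⟩ := hgc (f y) (hmaps_ball y hy) (f z) (hmaps_ball z hz)
  have hlow := hqh.dist_mul_le hfDG hD.1.1 hD.2 hG.1.1 hG.2 hM (by linarith [hϑ.2]) hx
    (ball_subset_closedBall hy) (ball_subset_closedBall hz)
  have hup := hqh.dist_image_mul_le hfDG hD.1.1 hD.2 hG.1.1 hG.2 hM (by linarith [hϑ.2]) hx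
    (ball_subset_closedBall hy) (ball_subset_closedBall hz)
  constructor
  · calc c * bdist G (f x) / bdist D x / (8 * M * L) * dist y z
        = c / (8 * M * L * bdist D x) * (dist y z * bdist G (f x)) := by field_simp
      _ ≤ c / (8 * M * L * bdist D x) * (4 * M * bdist D x * dist (f y) (f z)) := by gcongr
      _ = c / L * dist (f y) (f z) / 2 := by field_simp; ring
      _ ≤ c / L * dist (f y) (f z) := half_le_self (by positivity)
      _ ≤ dist ((g ∘ f) y) ((g ∘ f) z) := hglow
  · calc dist ((g ∘ f) y) ((g ∘ f) z) ≤ L * c * dist (f y) (f z) := hgup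
      _ = L * c / bdist D x * (dist (f y) (f z) * bdist D x) := by field_simp
      _ ≤ L * c / bdist D x * (8 * M * bdist G (f x) * dist y z) := by gcongr
      _ = 8 * M * L * (c * bdist G (f x) / bdist D x) * dist y z := by field_simp
end
end

section
/- For any points x, y, z, w in a metric space with x ≠ y and z ≠ w, one has ⟨x,y,z,w⟩ ≤ 3·max(τ(x,y,z,w), √(τ(x,y,z,w))), i.e. ⟨x,y,z,w⟩ ≤ θ₀(τ(x,y,z,w)) where θ₀(t) = 3·max(t, √t). -/
open Set Metric Topology

noncomputable section

universe u v w

theorem stmt_19 (X : Type u) [MetricSpace X] (x y z w : X)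
    (hxy : x ≠ y) (hzw : z ≠ w) :
    bkRatio x y z w ≤ 3 * max (crRatio x y z w) (Real.sqrt (crRatio x y z w)) := by
  have hp : 0 < dist x y := dist_pos.2 hxy
  have hq : 0 < dist z w := dist_pos.2 hzw
  have ha : (0:ℝ) ≤ dist x z := dist_nonneg
  have hb : (0:ℝ) ≤ dist y w := dist_nonneg
  set a := dist x z with hAdef
  set b := dist y w with hBdef
  set p := dist x y with hPdef
  set q := dist z w with hQdef
  have hτ0 : 0 ≤ crRatio x y z w := by
    unfold crRatio; positivity
  have hsn : 0 ≤ Real.sqrt (crRatio x y z w) := Real.sqrt_nonneg _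
  have hR0 : 0 ≤ 3 * max (crRatio x y z w) (Real.sqrt (crRatio x y z w)) := by
    have h := le_max_right (crRatio x y z w) (Real.sqrt (crRatio x y z w))
    nlinarith
  rcases eq_or_lt_of_le (le_min ha hb : (0:ℝ) ≤ min a b) with hm | hm
  · unfold bkRatio
    rw [← hm, zero_div]
    exact hR0
  · have ha' : 0 < a := lt_of_lt_of_le hm (min_le_left _ _)
    have hb' : 0 < b := lt_of_lt_of_le hm (min_le_right _ _)
    have hn : 0 < min p q := lt_min hp hq
    have h1 : p ≤ a + q + b := by
      have := dist_triangle4 x z w y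
      simpa [← hAdef, ← hBdef, ← hPdef, ← hQdef, dist_comm] using this
    have h2 : q ≤ a + p + b := by
      have := dist_triangle4 z x y w
      simpa [← hAdef, ← hBdef, ← hPdef, ← hQdef, dist_comm] using this
    have hPle : max p q ≤ a + b + min p q := by
      rcases le_total p q with h | h
      · rw [max_eq_right h, min_eq_left h]; linarith
      · rw [max_eq_left h, min_eq_right h]; linarith
    have hpq : min p q * max p q = p * q := min_mul_max p q
    have hab : min a b * max a b = a * b := min_mul_max a b
    have hma : min a b ≤ a := min_le_left _ _
    have hmb : min a b ≤ b := min_le_right _ _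
    have haM : a ≤ max a b := le_max_left _ _
    have hbM : b ≤ max a b := le_max_right _ _
    rcases le_total (min p q) (max a b) with hc | hc
    · -- case n ≤ M : bk ≤ 3 τ
      have key : bkRatio x y z w ≤ 3 * crRatio x y z w := by
        unfold bkRatio crRatio
        rw [← hAdef, ← hBdef, ← hPdef, ← hQdef,
          show (3:ℝ) * (a * b / (p * q)) = (3 * (a * b)) / (p * q) by ring,
          div_le_div_iff₀ hn (by positivity)]
        have h3 : a + b + min p q ≤ 3 * max a b := by linarith
        nlinarith [mul_nonneg (mul_nonneg hm.le hn.le) (sub_nonneg.2 hPle),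
          mul_nonneg (mul_nonneg hm.le hn.le) (sub_nonneg.2 h3), hpq, hab]
      calc bkRatio x y z w ≤ 3 * crRatio x y z w := key
        _ ≤ 3 * max (crRatio x y z w) (Real.sqrt (crRatio x y z w)) := by
            have := le_max_left (crRatio x y z w) (Real.sqrt (crRatio x y z w))
            linarith
    · -- case M ≤ n : bk ≤ 3 √τ
      have h9 : (min a b / (3 * min p q)) ^ 2 ≤ crRatio x y z w := by
        unfold crRatio
        rw [← hAdef, ← hBdef, ← hPdef, ← hQdef, div_pow, div_le_div_iff₀ (by positivity) (by positivity)]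
        have hm2 : (min a b) ^ 2 ≤ a * b := by
          nlinarith [mul_le_mul_of_nonneg_left (min_le_max (a := a) (b := b)) hm.le, hab]
        have hpq3 : p * q ≤ 3 * (min p q) ^ 2 := by
          have han : a ≤ min p q := le_trans haM hc
          have hbn : b ≤ min p q := le_trans hbM hc
          nlinarith [mul_nonneg hn.le (sub_nonneg.2 hPle), hpq,
            mul_nonneg hn.le (by linarith : (0:ℝ) ≤ 3 * min p q - (a + b + min p q))]
        nlinarith [mul_le_mul_of_nonneg_left hpq3 (sq_nonneg (min a b)),
          mul_le_mul_of_nonneg_right hm2 (by positivity : (0:ℝ) ≤ 3 * (min p q) ^ 2),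
          mul_nonneg (mul_nonneg ha hb) (sq_nonneg (min p q))]
      have hsq : min a b / (3 * min p q) ≤ Real.sqrt (crRatio x y z w) := by
        have := Real.sqrt_le_sqrt h9
        rwa [Real.sqrt_sq (by positivity)] at this
      have key : bkRatio x y z w ≤ 3 * Real.sqrt (crRatio x y z w) := by
        unfold bkRatio
        rw [← hAdef, ← hBdef, ← hPdef, ← hQdef]
        have : min a b / min p q = 3 * (min a b / (3 * min p q)) := by
          field_simp
        rw [this]
        linarith
      calc bkRatio x y z w ≤ 3 * Real.sqrt (crRatio x y z w) := key
        _ ≤ 3 * max (crRatio x y z w) (Real.sqrt (crRatio x y z w)) := by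
            have := le_max_right (crRatio x y z w) (Real.sqrt (crRatio x y z w))
            linarith
end
end
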